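/- arXiv:1610.07281 — 8 statements merged into one kernel-verified Lean document; each statement's English description precedes it below -/
import Mathlib

section
/- Let p : E → M be a normal cloven lax fibration of monoids with section j and kernel A. Then for every a ∈ A and x ∈ M there exists a unique element of A, denoted a·x, such that j(x)·(a·x) = a·j(x). -/
/-- Let `p : E → M` be a normal cloven lax fibration of monoids with
section `j` and kernel `A = p⁻¹(1)`.  Then for every `a ∈ A` and `x ∈ M` there exists a
unique element of `A`, denoted `a·x`, such that `j(x) * (a·x) = a * j(x)`. -/
theorem action_exists_unique {E M : Type*} [Monoid E] [Monoid M]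
    (p : E →* M) (j : M → E)
    (hpj : ∀ x : M, p (j x) = x) (hj1 : j 1 = 1)
    (hbij : Function.Bijective
      (fun q : M × (MonoidHom.mker p) => j q.1 * (q.2 : E))) :
    ∀ a : E, p a = 1 → ∀ x : M, ∃! b : E, p b = 1 ∧ j x * b = a * j x := by
  intro a ha x
  obtain ⟨⟨y, b⟩, hyb⟩ := hbij.2 (a * j x)
  simp only at hyb
  have hb : p (b : E) = 1 := b.2
  have hy : y = x := by
    have := congrArg p hyb
    simp [hpj, hb, ha] at this
    exact this
  subst hy
  refine ⟨(b : E), ⟨hb, hyb⟩, ?_⟩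
  rintro c ⟨hc, hcy⟩
  have := hbij.1 (a₁ := (y, ⟨c, hc⟩)) (a₂ := (y, b)) (by simpa using hcy.trans hyb.symm)
  exact congrArg Subtype.val (Prod.ext_iff.1 this).2
end

section
/- Let p : E → M be a normal cloven lax fibration of monoids with section j, kernel A, action a·x and factor set ρ. Then for all a ∈ A and x, y ∈ M the naturality equation (a·(x·y))·ρ(x,y) = ρ(x,y)·((a·x)·y) holds in A. -/
/-- Let `p : E → M` be a normal cloven lax fibration of monoids with
section `j`, kernel `A = p⁻¹(1)`, action `a·x` and factor set `ρ`.  Then for all `a ∈ A`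
and `x y ∈ M` the naturality equation `(a·(x*y)) * ρ(x,y) = ρ(x,y) * ((a·x)·y)` holds. -/
theorem action_rho_naturality {E M : Type*} [Monoid E] [Monoid M]
    (p : E →* M) (j : M → E)
    (hpj : ∀ x : M, p (j x) = x) (hj1 : j 1 = 1)
    (hbij : Function.Bijective
      (fun q : M × (MonoidHom.mker p) => j q.1 * (q.2 : E)))
    (act : MonoidHom.mker p → M → MonoidHom.mker p)
    (hact : ∀ (a : MonoidHom.mker p) (x : M), j x * (act a x : E) = (a : E) * j x)
    (rho : M → M → MonoidHom.mker p)
    (hrho : ∀ x y : M, j (x * y) * (rho x y : E) = j x * j y) :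
    ∀ (a : MonoidHom.mker p) (x y : M),
      act a (x * y) * rho x y = rho x y * act (act a x) y := by
  intro a x y
  have key : j (x * y) * ((act a (x * y) * rho x y : MonoidHom.mker p) : E)
      = j (x * y) * ((rho x y * act (act a x) y : MonoidHom.mker p) : E) := by
    push_cast
    calc j (x * y) * ((act a (x * y) : E) * (rho x y : E))
        = (j (x * y) * (act a (x * y) : E)) * (rho x y : E) := by rw [mul_assoc]
      _ = ((a : E) * j (x * y)) * (rho x y : E) := by rw [hact]
      _ = (a : E) * (j (x * y) * (rho x y : E)) := by rw [mul_assoc]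
      _ = (a : E) * (j x * j y) := by rw [hrho]
      _ = ((a : E) * j x) * j y := by rw [mul_assoc]
      _ = (j x * (act a x : E)) * j y := by rw [hact]
      _ = j x * ((act a x : E) * j y) := by rw [mul_assoc]
      _ = j x * (j y * (act (act a x) y : E)) := by rw [hact]
      _ = (j x * j y) * (act (act a x) y : E) := by rw [mul_assoc]
      _ = (j (x * y) * (rho x y : E)) * (act (act a x) y : E) := by rw [hrho]
      _ = j (x * y) * ((rho x y : E) * (act (act a x) y : E)) := by rw [mul_assoc]
  have := hbij.injective (a₁ := (x * y, act a (x * y) * rho x y))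
    (a₂ := (x * y, rho x y * act (act a x) y)) key
  exact (Prod.ext_iff.mp this).2
end

section
/- Let p : E → M be a normal cloven lax fibration of monoids with section j, kernel A, action a·x and factor set ρ. Then ρ satisfies the Schreier 2-cocycle condition: for all x, y, z ∈ M, ρ(x·y, z)·(ρ(x,y)·z) = ρ(x, y·z)·ρ(y,z) in A. -/
/-- Let `p : E → M` be a normal cloven lax fibration of monoids with
section `j`, kernel `A = p⁻¹(1)`, action `a·x` and factor set `ρ`.  Then `ρ` satisfies the
Schreier 2-cocycle condition: `ρ(x*y, z) * (ρ(x,y)·z) = ρ(x, y*z) * ρ(y,z)`. -/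
theorem factor_set_cocycle {E M : Type*} [Monoid E] [Monoid M]
    (p : E →* M) (j : M → E)
    (hpj : ∀ x : M, p (j x) = x) (hj1 : j 1 = 1)
    (hbij : Function.Bijective
      (fun q : M × (MonoidHom.mker p) => j q.1 * (q.2 : E)))
    (act : MonoidHom.mker p → M → MonoidHom.mker p)
    (hact : ∀ (a : MonoidHom.mker p) (x : M), j x * (act a x : E) = (a : E) * j x)
    (rho : M → M → MonoidHom.mker p)
    (hrho : ∀ x y : M, j (x * y) * (rho x y : E) = j x * j y) :
    ∀ x y z : M, rho (x * y) z * act (rho x y) z = rho x (y * z) * rho y z := by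
  intro x y z
  have key : j (x * y * z) * ((rho (x * y) z * act (rho x y) z : MonoidHom.mker p) : E)
      = j (x * y * z) * ((rho x (y * z) * rho y z : MonoidHom.mker p) : E) := by
    rw [Submonoid.coe_mul, Submonoid.coe_mul]
    calc j (x * y * z) * ((rho (x * y) z : E) * (act (rho x y) z : E))
        = (j (x * y * z) * (rho (x * y) z : E)) * (act (rho x y) z : E) :=
          (mul_assoc _ _ _).symm
      _ = (j (x * y) * j z) * (act (rho x y) z : E) := by rw [hrho]
      _ = j (x * y) * (j z * (act (rho x y) z : E)) := mul_assoc _ _ _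
      _ = j (x * y) * ((rho x y : E) * j z) := by rw [hact]
      _ = (j (x * y) * (rho x y : E)) * j z := (mul_assoc _ _ _).symm
      _ = (j x * j y) * j z := by rw [hrho]
      _ = j x * (j y * j z) := mul_assoc _ _ _
      _ = j x * (j (y * z) * (rho y z : E)) := by rw [hrho]
      _ = (j x * j (y * z)) * (rho y z : E) := (mul_assoc _ _ _).symm
      _ = (j (x * (y * z)) * (rho x (y * z) : E)) * (rho y z : E) := by rw [hrho]
      _ = j (x * y * z) * ((rho x (y * z) : E) * (rho y z : E)) := by
          rw [← mul_assoc x y z, mul_assoc]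
  have := hbij.injective (a₁ := (x * y * z, rho (x * y) z * act (rho x y) z))
    (a₂ := (x * y * z, rho x (y * z) * rho y z)) (by simpa using key)
  exact (Prod.ext_iff.mp this).2
end

section
/- Let p : E → M be a normal cloven lax fibration of monoids with section j, kernel A, action a·x and factor set ρ. Define on the set M × A the multiplication (x,a)·(y,b) := (x·y, ρ(x,y)·(a·y)·b) and the unit (1,1). Then M × A with this multiplication and unit is a monoid, and h : M × A → E, h(x,a) = j(x)·a, is an isomorphism of monoids. -/
/-- The wreath-product multiplication `(x,a)·(y,b) = (x*y, ρ(x,y) * (a·y) * b)` on `M × A`. -/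
def wreathMul {E M : Type*} [Monoid E] [Monoid M] (p : E →* M)
    (act : MonoidHom.mker p → M → MonoidHom.mker p)
    (rho : M → M → MonoidHom.mker p)
    (u v : M × MonoidHom.mker p) : M × MonoidHom.mker p :=
  (u.1 * v.1, rho u.1 v.1 * act u.2 v.1 * v.2)

/-- Let `p : E → M` be a normal cloven lax fibration of monoids with
section `j`, kernel `A = p⁻¹(1)`, action `a·x` and factor set `ρ`.  Equip `M × A` with the
multiplication `(x,a)·(y,b) = (x*y, ρ(x,y) * (a·y) * b)` and unit `(1,1)`.  Then `M × A` is
a monoid and `h : M × A → E`, `h(x,a) = j(x)*a`, is an isomorphism of monoids. -/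
theorem wreath_product_monoid_iso {E M : Type*} [Monoid E] [Monoid M]
    (p : E →* M) (j : M → E)
    (hpj : ∀ x : M, p (j x) = x) (hj1 : j 1 = 1)
    (hbij : Function.Bijective
      (fun q : M × (MonoidHom.mker p) => j q.1 * (q.2 : E)))
    (act : MonoidHom.mker p → M → MonoidHom.mker p)
    (hact : ∀ (a : MonoidHom.mker p) (x : M), j x * (act a x : E) = (a : E) * j x)
    (rho : M → M → MonoidHom.mker p)
    (hrho : ∀ x y : M, j (x * y) * (rho x y : E) = j x * j y) :
    (∀ u v w : M × MonoidHom.mker p,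
        wreathMul p act rho (wreathMul p act rho u v) w
          = wreathMul p act rho u (wreathMul p act rho v w)) ∧
    (∀ u : M × MonoidHom.mker p, wreathMul p act rho (1, 1) u = u) ∧
    (∀ u : M × MonoidHom.mker p, wreathMul p act rho u (1, 1) = u) ∧
    Function.Bijective (fun u : M × (MonoidHom.mker p) => j u.1 * (u.2 : E)) ∧
    (∀ u v : M × MonoidHom.mker p,
        j (wreathMul p act rho u v).1 * ((wreathMul p act rho u v).2 : E)
          = (j u.1 * (u.2 : E)) * (j v.1 * (v.2 : E))) ∧
    j (1 : M) * ((1 : MonoidHom.mker p) : E) = 1 := by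
  have hmul : ∀ u v : M × MonoidHom.mker p,
      j (wreathMul p act rho u v).1 * ((wreathMul p act rho u v).2 : E)
        = (j u.1 * (u.2 : E)) * (j v.1 * (v.2 : E)) := by
    intro u v
    simp only [wreathMul, Submonoid.coe_mul]
    calc j (u.1 * v.1) * ((rho u.1 v.1 : E) * (act u.2 v.1 : E) * (v.2 : E))
        = (j (u.1 * v.1) * (rho u.1 v.1 : E)) * (act u.2 v.1 : E) * (v.2 : E) := by
          simp [mul_assoc]
      _ = j u.1 * (j v.1 * (act u.2 v.1 : E)) * (v.2 : E) := by
          rw [hrho]; simp [mul_assoc]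
      _ = j u.1 * ((u.2 : E) * j v.1) * (v.2 : E) := by rw [hact]
      _ = (j u.1 * (u.2 : E)) * (j v.1 * (v.2 : E)) := by simp [mul_assoc]
  have hone : j (1 : M) * ((1 : MonoidHom.mker p) : E) = 1 := by simp [hj1]
  have hinj := hbij.1
  refine ⟨?_, ?_, ?_, hbij, hmul, hone⟩
  · intro u v w
    apply hinj
    show j _ * _ = j _ * _
    rw [hmul, hmul, hmul, hmul, mul_assoc]
  · intro u
    apply hinj
    show j _ * _ = j _ * _
    rw [hmul]
    simp [hj1]
  · intro u
    apply hinj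
    show j _ * _ = j _ * _
    rw [hmul]
    simp [hj1]
end

section
/- Let (G, ζ, δ, ε) be a mixed opwreath around a monad T on a category 𝒜. Then wreath convolution is associative: for all morphisms f : GA → TB, g : GB → TC, h : GC → TD of 𝒜, (f ∗ g) ∗ h = f ∗ (g ∗ h). -/
open CategoryTheory

section Aux
variable {𝒜 : Type*} [Category 𝒜] (T : 𝒜 ⥤ 𝒜) (μ : T ⋙ T ⟶ T)

/-- Kleisli extension operator. -/
def Ew {X Y : 𝒜} (u : X ⟶ T.obj Y) : T.obj X ⟶ T.obj Y :=
  T.map u ≫ μ.app Y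

theorem Ew_comp
    (hassoc : ∀ X : 𝒜, T.map (μ.app X) ≫ μ.app X = μ.app (T.obj X) ≫ μ.app X)
    {X Y Z : 𝒜} (u : X ⟶ T.obj Y) (v : Y ⟶ T.obj Z) :
    Ew T μ (u ≫ Ew T μ v) = Ew T μ u ≫ Ew T μ v := by
  have hnat := μ.naturality v
  simp only [Functor.comp_map] at hnat
  simp only [Ew, Functor.map_comp, Category.assoc, hassoc Z]
  rw [reassoc_of% hnat]

theorem GEw (G : 𝒜 ⥤ 𝒜) (ζ : T ⋙ G ⟶ G ⋙ T)
    (w1 : ∀ X : 𝒜, G.map (μ.app X) ≫ ζ.app X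
        = ζ.app (T.obj X) ≫ T.map (ζ.app X) ≫ μ.app (G.obj X))
    {X Y : 𝒜} (u : X ⟶ T.obj Y) :
    G.map (Ew T μ u) ≫ ζ.app Y = ζ.app X ≫ Ew T μ (G.map u ≫ ζ.app Y) := by
  have hnat := ζ.naturality u
  simp only [Functor.comp_map] at hnat
  simp only [Ew, Functor.map_comp, Category.assoc, w1 Y]
  rw [reassoc_of% hnat]

end Aux

/-- Wreath convolution: the composite of `f : GA ⟶ TB` and `g : GB ⟶ TC` in the mixed
Kleisli category of a mixed opwreath `(G, ζ, δ, ε)` around the monad `T`. -/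
def wreathConv {𝒜 : Type*} [Category 𝒜] (T G : 𝒜 ⥤ 𝒜)
    (μ : T ⋙ T ⟶ T) (ζ : T ⋙ G ⟶ G ⋙ T) (δ : G ⟶ G ⋙ G ⋙ T)
    {A B C : 𝒜} (f : G.obj A ⟶ T.obj B) (g : G.obj B ⟶ T.obj C) :
    G.obj A ⟶ T.obj C :=
  δ.app A ≫ T.map (G.map f) ≫ T.map (ζ.app B) ≫ T.map (T.map g)
    ≫ T.map (μ.app C) ≫ μ.app C

/-- For a mixed opwreath `(G, ζ, δ, ε)` around a monad `T` on a
category `𝒜`, wreath convolution is associative. -/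
theorem wreathConv_assoc {𝒜 : Type*} [Category 𝒜]
    (T G : 𝒜 ⥤ 𝒜) (μ : T ⋙ T ⟶ T) (η : 𝟭 𝒜 ⟶ T)
    (hassoc : ∀ X : 𝒜, T.map (μ.app X) ≫ μ.app X = μ.app (T.obj X) ≫ μ.app X)
    (hlunit : ∀ X : 𝒜, η.app (T.obj X) ≫ μ.app X = 𝟙 (T.obj X))
    (hrunit : ∀ X : 𝒜, T.map (η.app X) ≫ μ.app X = 𝟙 (T.obj X))
    (ζ : T ⋙ G ⟶ G ⋙ T) (δ : G ⟶ G ⋙ G ⋙ T) (ε : G ⟶ T)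
    (w1 : ∀ X : 𝒜, G.map (μ.app X) ≫ ζ.app X
        = ζ.app (T.obj X) ≫ T.map (ζ.app X) ≫ μ.app (G.obj X))
    (w2 : ∀ X : 𝒜, G.map (η.app X) ≫ ζ.app X = η.app (G.obj X))
    (w3 : ∀ X : 𝒜, ζ.app X ≫ T.map (ε.app X) ≫ μ.app X = ε.app (T.obj X) ≫ μ.app X)
    (w4 : ∀ X : 𝒜, ζ.app X ≫ T.map (δ.app X) ≫ μ.app (G.obj (G.obj X))
        = δ.app (T.obj X) ≫ T.map (G.map (ζ.app X)) ≫ T.map (ζ.app (G.obj X))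
            ≫ μ.app (G.obj (G.obj X)))
    (w5 : ∀ X : 𝒜, δ.app X ≫ T.map (δ.app (G.obj X)) ≫ μ.app (G.obj (G.obj (G.obj X)))
        = δ.app X ≫ T.map (G.map (δ.app X)) ≫ T.map (ζ.app (G.obj (G.obj X)))
            ≫ μ.app (G.obj (G.obj (G.obj X))))
    (w6 : ∀ X : 𝒜, δ.app X ≫ T.map (ε.app (G.obj X)) ≫ μ.app (G.obj X) = η.app (G.obj X))
    (w7 : ∀ X : 𝒜, δ.app X ≫ T.map (G.map (ε.app X)) ≫ T.map (ζ.app X) ≫ μ.app (G.obj X)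
        = η.app (G.obj X))
    {A B C D : 𝒜} (f : G.obj A ⟶ T.obj B) (g : G.obj B ⟶ T.obj C)
    (h : G.obj C ⟶ T.obj D) :
    wreathConv T G μ ζ δ (wreathConv T G μ ζ δ f g) h
      = wreathConv T G μ ζ δ f (wreathConv T G μ ζ δ g h) := by
  have hE : ∀ {X Y Z : 𝒜} (u : X ⟶ T.obj Y) (v : Y ⟶ T.obj Z),
      Ew T μ (u ≫ Ew T μ v) = Ew T μ u ≫ Ew T μ v :=
    fun u v => Ew_comp T μ hassoc u v
  have hg : ∀ {X Y : 𝒜} (u : X ⟶ T.obj Y),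
      G.map (Ew T μ u) ≫ ζ.app Y = ζ.app X ≫ Ew T μ (G.map u ≫ ζ.app Y) :=
    fun u => GEw T μ G ζ w1 u
  have conv : ∀ {X Y Z : 𝒜} (u : G.obj X ⟶ T.obj Y) (v : G.obj Y ⟶ T.obj Z),
      wreathConv T G μ ζ δ u v
        = δ.app X ≫ Ew T μ ((G.map u ≫ ζ.app Y) ≫ Ew T μ v) := by
    intro X Y Z u v
    simp [wreathConv, Ew]
  have h5 : δ.app A ≫ Ew T μ (G.map (δ.app A) ≫ ζ.app (G.obj (G.obj A)))
      = δ.app A ≫ Ew T μ (δ.app (G.obj A)) := by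
    simp only [Ew, Functor.map_comp, Category.assoc]
    exact (w5 A).symm
  have hδ := δ.naturality f
  simp only [Functor.comp_map] at hδ
  have h4 : δ.app (G.obj A) ≫ Ew T μ (G.map (G.map f ≫ ζ.app B) ≫ ζ.app (G.obj B))
      = (G.map f ≫ ζ.app B) ≫ Ew T μ (δ.app B) := by
    simp only [Ew, Functor.map_comp, Category.assoc]
    rw [← reassoc_of% hδ, w4 B]
  have step : G.map (wreathConv T G μ ζ δ f g) ≫ ζ.app C
      = (G.map (δ.app A) ≫ ζ.app (G.obj (G.obj A)))
          ≫ Ew T μ ((G.map (G.map f ≫ ζ.app B) ≫ ζ.app (G.obj B))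
              ≫ Ew T μ (G.map g ≫ ζ.app C)) := by
    rw [conv f g, G.map_comp, Category.assoc, hg ((G.map f ≫ ζ.app B) ≫ Ew T μ g)]
    rw [show G.map ((G.map f ≫ ζ.app B) ≫ Ew T μ g) ≫ ζ.app C
          = (G.map (G.map f ≫ ζ.app B) ≫ ζ.app (G.obj B)) ≫ Ew T μ (G.map g ≫ ζ.app C) by
        rw [G.map_comp, Category.assoc, hg g, ← Category.assoc]]
    rw [← Category.assoc]
  calc wreathConv T G μ ζ δ (wreathConv T G μ ζ δ f g) h
      = δ.app A ≫ Ew T μ ((G.map (wreathConv T G μ ζ δ f g) ≫ ζ.app C) ≫ Ew T μ h) :=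
        conv _ _
    _ = δ.app A ≫ Ew T μ (G.map (wreathConv T G μ ζ δ f g) ≫ ζ.app C) ≫ Ew T μ h := by
        rw [hE]
    _ = δ.app A
          ≫ Ew T μ ((G.map (δ.app A) ≫ ζ.app (G.obj (G.obj A)))
              ≫ Ew T μ ((G.map (G.map f ≫ ζ.app B) ≫ ζ.app (G.obj B))
                  ≫ Ew T μ (G.map g ≫ ζ.app C)))
          ≫ Ew T μ h := by rw [step]
    _ = δ.app A
          ≫ Ew T μ (G.map (δ.app A) ≫ ζ.app (G.obj (G.obj A)))
          ≫ Ew T μ (G.map (G.map f ≫ ζ.app B) ≫ ζ.app (G.obj B))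
          ≫ Ew T μ (G.map g ≫ ζ.app C)
          ≫ Ew T μ h := by rw [hE, hE]; simp only [Category.assoc]
    _ = δ.app A
          ≫ Ew T μ (δ.app (G.obj A))
          ≫ Ew T μ (G.map (G.map f ≫ ζ.app B) ≫ ζ.app (G.obj B))
          ≫ Ew T μ (G.map g ≫ ζ.app C)
          ≫ Ew T μ h := by rw [reassoc_of% h5]
    _ = δ.app A
          ≫ Ew T μ (δ.app (G.obj A) ≫ Ew T μ (G.map (G.map f ≫ ζ.app B) ≫ ζ.app (G.obj B)))
          ≫ Ew T μ (G.map g ≫ ζ.app C)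
          ≫ Ew T μ h := by rw [hE]; simp only [Category.assoc]
    _ = δ.app A
          ≫ Ew T μ ((G.map f ≫ ζ.app B) ≫ Ew T μ (δ.app B))
          ≫ Ew T μ (G.map g ≫ ζ.app C)
          ≫ Ew T μ h := by rw [h4]
    _ = δ.app A
          ≫ Ew T μ (G.map f ≫ ζ.app B)
          ≫ Ew T μ (δ.app B)
          ≫ Ew T μ (G.map g ≫ ζ.app C)
          ≫ Ew T μ h := by rw [hE]; try simp only [Category.assoc]
    _ = δ.app A
          ≫ Ew T μ (G.map f ≫ ζ.app B)
          ≫ Ew T μ (δ.app B ≫ Ew T μ ((G.map g ≫ ζ.app C) ≫ Ew T μ h)) := by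
        rw [hE, hE]
    _ = δ.app A ≫ Ew T μ (G.map f ≫ ζ.app B) ≫ Ew T μ (wreathConv T G μ ζ δ g h) := by
        rw [conv g h]
    _ = δ.app A ≫ Ew T μ ((G.map f ≫ ζ.app B) ≫ Ew T μ (wreathConv T G μ ζ δ g h)) := by
        rw [hE]
    _ = wreathConv T G μ ζ δ f (wreathConv T G μ ζ δ g h) := (conv _ _).symm
end

section
/- Let (γ, τ) be a twisted coaction of a bimonoid B on a monoid A in a braided monoidal category 𝒱, and let z := ((j⊗1_B)∘λ_B⁻¹)•γ : B⊗A → A⊗B. Then z satisfies the two distributive-law equations of a mixed opwreath: (i) z ∘ (1_B⊗m) = (m⊗1_B) ∘ (1_A⊗z) ∘ (z⊗1_A) : B⊗A⊗A → A⊗B, and (ii) z ∘ (1_B⊗j) ∘ ρ_B⁻¹ = (j⊗1_B) ∘ λ_B⁻¹ : B → A⊗B. -/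
/-!
`A ⊗ B` is a monoid for the braided product, `γ` is a monoid morphism into it, and
`z = u • γ` with `u = (j ⊗ 1_B) ∘ λ⁻¹`. Then (ii) is `u • (γ ∘ j) = u • 1 = u`, and for (i)
`u • (γ ∘ m) = u • (γ • γ) = (u • γ) • γ` by associativity in `A ⊗ B`; it remains to see that
right multiplication of `a ⊗ b` by `γ a'` is `a · z (b ⊗ a')`, which holds because
`z (b ⊗ a') = a'₀ ⊗ b a'₁`.
-/

open CategoryTheory MonoidalCategory

variable {𝒱 : Type*} [Category 𝒱] [MonoidalCategory 𝒱] [BraidedCategory 𝒱]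

/-- The multiplication of the braided tensor product of two monoids `(X, mX)` and
`(Y, mY)`: `(mX ⊗ mY) ∘ (1_X ⊗ σ_{Y,X} ⊗ 1_Y)`, written with explicit associators. -/
def tensorMul (X Y : 𝒱) (mX : X ⊗ X ⟶ X) (mY : Y ⊗ Y ⟶ Y) :
    (X ⊗ Y) ⊗ (X ⊗ Y) ⟶ X ⊗ Y :=
  (α_ X Y (X ⊗ Y)).hom ≫ (X ◁ (α_ Y X Y).inv) ≫ (X ◁ ((β_ Y X).hom ▷ Y)) ≫
    (X ◁ (α_ X Y Y).hom) ≫ (α_ X X (Y ⊗ Y)).inv ≫ (mX ⊗ₘ mY)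

/-- The map `z := ((j ⊗ 1_B) ∘ λ_B⁻¹) • γ : B ⊗ A ⟶ A ⊗ B` built from a twisted
coaction `γ`; the dot product is taken in the braided tensor-product monoid `A ⊗ B`. -/
def zMap (A B : 𝒱) (m : A ⊗ A ⟶ A) (j : 𝟙_ 𝒱 ⟶ A) (mB : B ⊗ B ⟶ B)
    (γ : A ⟶ A ⊗ B) : B ⊗ A ⟶ A ⊗ B :=
  (((λ_ B).inv ≫ (j ▷ B)) ⊗ₘ γ) ≫ tensorMul A B m mB

/-- The map `d := (((j ⊗ Δ) ∘ λ_B⁻¹) • τ) ∘ ρ_B⁻¹ : B ⟶ (A ⊗ B) ⊗ B` built from a twisted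
coaction `(γ, τ)`; the dot product is taken in the braided tensor-product monoid
`(A ⊗ B) ⊗ B`. -/
def dMap (A B : 𝒱) (m : A ⊗ A ⟶ A) (j : 𝟙_ 𝒱 ⟶ A) (mB : B ⊗ B ⟶ B)
    (Δ : B ⟶ B ⊗ B) (τ : 𝟙_ 𝒱 ⟶ (A ⊗ B) ⊗ B) : B ⟶ (A ⊗ B) ⊗ B :=
  (ρ_ B).inv ≫ (((λ_ B).inv ≫ (j ⊗ₘ Δ) ≫ (α_ A B B).inv) ⊗ₘ τ) ≫
    tensorMul (A ⊗ B) B (tensorMul A B m mB) mB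

section

-- This scope makes `γ` notation for `ModObj.smul`, so the coaction is called `δ` below.
open scoped MonObj

lemma MonObj.tensorHom_mul_tensorHom_mul {C : Type*} [Category C] [MonoidalCategory C]
    {M X Y Z : C} [MonObj M] (f : X ⟶ M) (g : Y ⟶ M) (h : Z ⟶ M) :
    (((f ⊗ₘ g) ≫ μ) ⊗ₘ h) ≫ μ = (α_ X Y Z).hom ≫ (f ⊗ₘ ((g ⊗ₘ h) ≫ μ)) ≫ μ := by
  simp only [mon_tauto]

variable {A B : 𝒱} [MonObj A] [MonObj B]

lemma tensorMul_eq_mul : tensorMul A B μ μ = μ[A ⊗ B] := by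
  simp [tensorMul, tensorμ, MonObj.tensorObj.mul_def]

lemma zMap_eq_mul (δ : A ⟶ A ⊗ B) :
    zMap A B μ η μ δ = (((λ_ B).inv ≫ (η ▷ B)) ⊗ₘ δ) ≫ μ[A ⊗ B] := by
  rw [zMap, tensorMul_eq_mul]

lemma zMap_eq_braiding (δ : A ⟶ A ⊗ B) :
    zMap A B μ η μ δ =
      (B ◁ δ) ≫ (α_ B A B).inv ≫ ((β_ B A).hom ▷ B) ≫ (α_ A B B).hom ≫ (A ◁ μ) := by
  rw [zMap_eq_mul, MonObj.tensorObj.mul_def, tensorHom_def', Category.assoc, comp_whiskerRight,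
    Category.assoc, ← tensorHom_id η, tensorμ_natural_left_assoc, tensorHom_comp_tensorHom,
    MonObj.one_mul]
  simp only [id_whiskerRight, Category.id_comp, tensorHom_def (λ_ A).hom μ, tensorμ]
  monoidal

lemma whiskerLeft_comp_mul_eq_zMap (δ : A ⟶ A ⊗ B) :
    ((A ⊗ B) ◁ δ) ≫ μ[A ⊗ B] =
      (α_ A B A).hom ≫ (A ◁ zMap A B μ η μ δ) ≫ (α_ A A B).inv ≫ (μ ▷ B) := by
  rw [zMap_eq_braiding, MonObj.tensorObj.mul_def, tensorHom_def μ μ]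
  simp only [tensorμ, MonoidalCategory.whiskerLeft_comp, Category.assoc]
  rw [← associator_naturality_right_assoc, ← whisker_exchange,
    ← associator_inv_naturality_right_assoc]

variable (δ : A ⟶ A ⊗ B) [IsMonHom δ]

lemma zMap_mul :
    (α_ B A A).hom ≫ (B ◁ μ) ≫ zMap A B μ η μ δ =
      (zMap A B μ η μ δ ▷ A) ≫ (α_ A B A).hom ≫ (A ◁ zMap A B μ η μ δ) ≫
        (α_ A A B).inv ≫ (μ ▷ B) := by
  set u : B ⟶ A ⊗ B := (λ_ B).inv ≫ (η ▷ B)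
  calc (α_ B A A).hom ≫ (B ◁ μ) ≫ zMap A B μ η μ δ
      = (α_ B A A).hom ≫ (u ⊗ₘ ((δ ⊗ₘ δ) ≫ μ)) ≫ μ := by
        rw [zMap_eq_mul, ← IsMonHom.mul_hom, ← id_tensorHom, tensorHom_comp_tensorHom_assoc,
          Category.id_comp]
    _ = (((u ⊗ₘ δ) ≫ μ) ⊗ₘ δ) ≫ μ := (MonObj.tensorHom_mul_tensorHom_mul u δ δ).symm
    _ = _ := by
        rw [← zMap_eq_mul, MonoidalCategory.tensorHom_def, Category.assoc,
          whiskerLeft_comp_mul_eq_zMap]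

lemma zMap_one : (ρ_ B).inv ≫ (B ◁ η) ≫ zMap A B μ η μ δ = (λ_ B).inv ≫ (η ▷ B) := by
  rw [zMap_eq_mul, ← id_tensorHom, tensorHom_comp_tensorHom_assoc, Category.id_comp,
    IsMonHom.one_hom, MonObj.mul_one_hom, Iso.inv_hom_id_assoc]

end

theorem twisted_coaction_distributive_law_general
    (A B : 𝒱) (m : A ⊗ A ⟶ A) (j : 𝟙_ 𝒱 ⟶ A)
    (mB : B ⊗ B ⟶ B) (jB : 𝟙_ 𝒱 ⟶ B)
    -- `A` is a monoid
    (hA_assoc : (m ▷ A) ≫ m = (α_ A A A).hom ≫ (A ◁ m) ≫ m)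
    (hA_one_mul : (j ▷ A) ≫ m = (λ_ A).hom)
    (hA_mul_one : (A ◁ j) ≫ m = (ρ_ A).hom)
    -- `B` is a monoid
    (hB_assoc : (mB ▷ B) ≫ mB = (α_ B B B).hom ≫ (B ◁ mB) ≫ mB)
    (hB_one_mul : (jB ▷ B) ≫ mB = (λ_ B).hom)
    (hB_mul_one : (B ◁ jB) ≫ mB = (ρ_ B).hom)
    -- twisted coaction data: `γ` is a monoid morphism, `τ` a normalized `2`-cocycle
    (γ : A ⟶ A ⊗ B)
    (hγ_mul : m ≫ γ = (γ ⊗ₘ γ) ≫ tensorMul A B m mB)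
    (hγ_one : j ≫ γ = (λ_ (𝟙_ 𝒱)).inv ≫ (j ⊗ₘ jB)) :
    ((α_ B A A).hom ≫ (B ◁ m) ≫ zMap A B m j mB γ
        = (zMap A B m j mB γ ▷ A) ≫ (α_ A B A).hom ≫ (A ◁ zMap A B m j mB γ)
            ≫ (α_ A A B).inv ≫ (m ▷ B)) ∧
    ((ρ_ B).inv ≫ (B ◁ j) ≫ zMap A B m j mB γ = (λ_ B).inv ≫ (j ▷ B)) := by
  let : MonObj A := ⟨j, m, hA_one_mul, hA_mul_one, hA_assoc⟩
  let : MonObj B := ⟨jB, mB, hB_one_mul, hB_mul_one, hB_assoc⟩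
  have : IsMonHom γ := ⟨hγ_one, hγ_mul.trans (congrArg ((γ ⊗ₘ γ) ≫ ·) tensorMul_eq_mul)⟩
  exact ⟨zMap_mul γ, zMap_one γ⟩

/-- For a twisted coaction `(γ, τ)` of a bimonoid `B` on a monoid `A`
in a braided monoidal category, the map `z := ((j ⊗ 1_B) ∘ λ_B⁻¹) • γ : B ⊗ A ⟶ A ⊗ B`
satisfies the two distributive-law equations of a mixed opwreath. -/
theorem twisted_coaction_distributive_law
    (A B : 𝒱) (m : A ⊗ A ⟶ A) (j : 𝟙_ 𝒱 ⟶ A)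
    (mB : B ⊗ B ⟶ B) (jB : 𝟙_ 𝒱 ⟶ B) (Δ : B ⟶ B ⊗ B) (εB : B ⟶ 𝟙_ 𝒱)
    -- `A` is a monoid
    (hA_assoc : (m ▷ A) ≫ m = (α_ A A A).hom ≫ (A ◁ m) ≫ m)
    (hA_one_mul : (j ▷ A) ≫ m = (λ_ A).hom)
    (hA_mul_one : (A ◁ j) ≫ m = (ρ_ A).hom)
    -- `B` is a monoid
    (hB_assoc : (mB ▷ B) ≫ mB = (α_ B B B).hom ≫ (B ◁ mB) ≫ mB)
    (hB_one_mul : (jB ▷ B) ≫ mB = (λ_ B).hom)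
    (hB_mul_one : (B ◁ jB) ≫ mB = (ρ_ B).hom)
    -- `B` is a comonoid
    (hB_coassoc : Δ ≫ (Δ ▷ B) ≫ (α_ B B B).hom = Δ ≫ (B ◁ Δ))
    (hB_counit_left : Δ ≫ (εB ▷ B) ≫ (λ_ B).hom = 𝟙 B)
    (hB_counit_right : Δ ≫ (B ◁ εB) ≫ (ρ_ B).hom = 𝟙 B)
    -- `B` is a bimonoid: `Δ` and `εB` are monoid morphisms
    (hB_compat_mul : mB ≫ Δ = (Δ ⊗ₘ Δ) ≫ tensorMul B B mB mB)
    (hB_compat_one : jB ≫ Δ = (λ_ (𝟙_ 𝒱)).inv ≫ (jB ⊗ₘ jB))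
    (hB_counit_mul : mB ≫ εB = (εB ⊗ₘ εB) ≫ (λ_ (𝟙_ 𝒱)).hom)
    (hB_counit_one : jB ≫ εB = 𝟙 (𝟙_ 𝒱))
    -- twisted coaction data: `γ` is a monoid morphism, `τ` a normalized `2`-cocycle
    (γ : A ⟶ A ⊗ B) (τ : 𝟙_ 𝒱 ⟶ (A ⊗ B) ⊗ B)
    (hγ_mul : m ≫ γ = (γ ⊗ₘ γ) ≫ tensorMul A B m mB)
    (hγ_one : j ≫ γ = (λ_ (𝟙_ 𝒱)).inv ≫ (j ⊗ₘ jB))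
    (hcounital : γ ≫ (A ◁ εB) ≫ (ρ_ A).hom = 𝟙 A)
    (hτ_coassoc :
      (λ_ A).inv ≫ (τ ⊗ₘ (γ ≫ (γ ▷ B))) ≫ tensorMul (A ⊗ B) B (tensorMul A B m mB) mB
        = (ρ_ A).inv ≫ ((γ ≫ (A ◁ Δ) ≫ (α_ A B B).inv) ⊗ₘ τ) ≫
            tensorMul (A ⊗ B) B (tensorMul A B m mB) mB)
    (hcocycle :
      (λ_ (𝟙_ 𝒱)).inv ≫
          ((τ ≫ ((A ◁ Δ) ▷ B) ≫ ((α_ A B B).inv ▷ B)) ⊗ₘ ((λ_ (𝟙_ 𝒱)).inv ≫ (τ ⊗ₘ jB))) ≫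
          tensorMul ((A ⊗ B) ⊗ B) B (tensorMul (A ⊗ B) B (tensorMul A B m mB) mB) mB
        = (λ_ (𝟙_ 𝒱)).inv ≫
          ((τ ≫ ((A ⊗ B) ◁ Δ) ≫ (α_ (A ⊗ B) B B).inv) ⊗ₘ (τ ≫ ((γ ▷ B) ▷ B))) ≫
          tensorMul ((A ⊗ B) ⊗ B) B (tensorMul (A ⊗ B) B (tensorMul A B m mB) mB) mB)
    (hnormal₁ : τ ≫ ((A ⊗ B) ◁ εB) ≫ (ρ_ (A ⊗ B)).hom = (λ_ (𝟙_ 𝒱)).inv ≫ (j ⊗ₘ jB))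
    (hnormal₂ : τ ≫ ((A ◁ εB) ▷ B) ≫ ((ρ_ A).hom ▷ B) = (λ_ (𝟙_ 𝒱)).inv ≫ (j ⊗ₘ jB)) :
    ((α_ B A A).hom ≫ (B ◁ m) ≫ zMap A B m j mB γ
        = (zMap A B m j mB γ ▷ A) ≫ (α_ A B A).hom ≫ (A ◁ zMap A B m j mB γ)
            ≫ (α_ A A B).inv ≫ (m ▷ B)) ∧
    ((ρ_ B).inv ≫ (B ◁ j) ≫ zMap A B m j mB γ = (λ_ B).inv ≫ (j ▷ B)) :=
  twisted_coaction_distributive_law_general A B m j mB jB hA_assoc hA_one_mul hA_mul_one hB_assoc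
    hB_one_mul hB_mul_one γ hγ_mul hγ_one
end

section
/- Let (γ, τ) be a twisted coaction of a bimonoid B on a monoid A in a braided monoidal category 𝒱, and define z := ((j⊗1_B)∘λ_B⁻¹)•γ : B⊗A → A⊗B, d := (((j⊗Δ)∘λ_B⁻¹)•τ)∘ρ_B⁻¹ : B → A⊗B⊗B, and w := j∘ε_B : B → A (the composite B → I → A). Then the three counit equations of a mixed opwreath hold: (iii) m ∘ (1_A⊗w) ∘ z = m ∘ (w⊗1_A) : B⊗A → A; (vi) (m⊗1_B) ∘ (1_A⊗w⊗1_B) ∘ d = (j⊗1_B) ∘ λ_B⁻¹ : B → A⊗B; (vii) (m⊗1_B) ∘ (1_A⊗z) ∘ (1_{A⊗B}⊗w) ∘ d = (j⊗1_B) ∘ λ_B⁻¹ : B → A⊗B. -/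
open CategoryTheory MonoidalCategory

variable {𝒱 : Type*} [Category 𝒱] [MonoidalCategory 𝒱] [BraidedCategory 𝒱]

/-! Composing with `1_A ⊗ ε_B` (or `1_{A⊗B} ⊗ ε_B`) turns braided products into plain products
because `ε_B` is multiplicative. Under it, counitality collapses `γ` to the identity and
normality collapses `τ` to the unit, so `z` and `d` reduce to unit maps and the unit laws
of `A` and `B` finish each equation. -/

section TensorMul

variable (X Y : 𝒱) (mX : X ⊗ X ⟶ X) (mY : Y ⊗ Y ⟶ Y)

lemma tensorMul_eq_tensorμ : tensorMul X Y mX mY = tensorμ X Y X Y ≫ (mX ⊗ₘ mY) := by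
  simp only [tensorMul, tensorμ, Category.assoc]

lemma tensorμ_unit_comp_rightUnitor :
    tensorμ X (𝟙_ 𝒱) Y (𝟙_ 𝒱) ≫ ((X ⊗ Y) ◁ (λ_ (𝟙_ 𝒱)).hom) ≫ (ρ_ (X ⊗ Y)).hom
      = (ρ_ X).hom ⊗ₘ (ρ_ Y).hom := by
  have hβ : (β_ (𝟙_ 𝒱) Y).hom = (λ_ Y).hom ≫ (ρ_ Y).inv := by simp
  rw [tensorμ, hβ]
  monoidal

lemma tensorMul_comp_whiskerRight {X' : 𝒱} (mX' : X' ⊗ X' ⟶ X') (f : X ⟶ X')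
    (hf : mX ≫ f = (f ⊗ₘ f) ≫ mX') :
    tensorMul X Y mX mY ≫ (f ▷ Y) = ((f ▷ Y) ⊗ₘ (f ▷ Y)) ≫ tensorMul X' Y mX' mY := by
  rw [tensorMul_eq_tensorμ, tensorMul_eq_tensorμ, ← tensorHom_id f Y,
    tensorμ_natural_assoc f (𝟙 Y) f (𝟙 Y)]
  simp only [Category.assoc, tensorHom_comp_tensorHom, ← hf, id_tensorHom_id,
    Category.id_comp, Category.comp_id]

lemma tensorMul_comp_counit (ε : Y ⟶ 𝟙_ 𝒱) (hε : mY ≫ ε = (ε ⊗ₘ ε) ≫ (λ_ (𝟙_ 𝒱)).hom) :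
    tensorMul X Y mX mY ≫ (X ◁ ε) ≫ (ρ_ X).hom
      = (((X ◁ ε) ≫ (ρ_ X).hom) ⊗ₘ ((X ◁ ε) ≫ (ρ_ X).hom)) ≫ mX := by
  have hmul : (mX ⊗ₘ mY) ≫ (X ◁ ε)
      = ((𝟙 X ⊗ₘ 𝟙 X) ⊗ₘ (ε ⊗ₘ ε)) ≫ (mX ⊗ₘ (λ_ (𝟙_ 𝒱)).hom) := by
    rw [← id_tensorHom, tensorHom_comp_tensorHom, Category.comp_id, hε, tensorHom_comp_tensorHom]
    simp
  rw [tensorMul_eq_tensorμ, Category.assoc, reassoc_of% hmul,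
    ← tensorμ_natural_assoc (𝟙 X) ε (𝟙 X) ε, tensorHom_def' mX, Category.assoc,
    rightUnitor_naturality, reassoc_of% tensorμ_unit_comp_rightUnitor,
    tensorHom_comp_tensorHom_assoc]
  simp

variable (jX : 𝟙_ 𝒱 ⟶ X) (jY : 𝟙_ 𝒱 ⟶ Y)

lemma whiskerLeft_unit_comp_tensorMul
    (hX : (X ◁ jX) ≫ mX = (ρ_ X).hom) (hY : (Y ◁ jY) ≫ mY = (ρ_ Y).hom) :
    ((X ⊗ Y) ◁ ((λ_ (𝟙_ 𝒱)).inv ≫ (jX ⊗ₘ jY))) ≫ tensorMul X Y mX mY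
      = (ρ_ (X ⊗ Y)).hom := by
  rw [tensorMul_eq_tensorμ, whiskerLeft_comp, Category.assoc, tensorμ_natural_right_assoc,
    tensorHom_comp_tensorHom, hX, hY, ← tensor_right_unitality]

lemma tensorHom_unit_comp_tensorMul {W : 𝒱} (f : W ⟶ X ⊗ Y)
    (hX : (X ◁ jX) ≫ mX = (ρ_ X).hom) (hY : (Y ◁ jY) ≫ mY = (ρ_ Y).hom) :
    (f ⊗ₘ ((λ_ (𝟙_ 𝒱)).inv ≫ (jX ⊗ₘ jY))) ≫ tensorMul X Y mX mY = (ρ_ W).hom ≫ f := by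
  rw [MonoidalCategory.tensorHom_def, Category.assoc,
    whiskerLeft_unit_comp_tensorMul X Y mX mY jX jY hX hY, rightUnitor_naturality]

end TensorMul

section TwistedCoaction

variable {A B : 𝒱} {m : A ⊗ A ⟶ A} {j : 𝟙_ 𝒱 ⟶ A} {mB : B ⊗ B ⟶ B} {jB : 𝟙_ 𝒱 ⟶ B}

lemma zMap_comp_counit {γ : A ⟶ A ⊗ B} {εB : B ⟶ 𝟙_ 𝒱}
    (hB_counit_mul : mB ≫ εB = (εB ⊗ₘ εB) ≫ (λ_ (𝟙_ 𝒱)).hom)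
    (hcounital : γ ≫ (A ◁ εB) ≫ (ρ_ A).hom = 𝟙 A) :
    zMap A B m j mB γ ≫ (A ◁ εB) ≫ (ρ_ A).hom = ((εB ≫ j) ▷ A) ≫ m := by
  have hunit_counit : ((λ_ B).inv ≫ (j ▷ B)) ≫ (A ◁ εB) ≫ (ρ_ A).hom = εB ≫ j := by
    simp only [Category.assoc, ← whisker_exchange_assoc]
    simp [← unitors_equal]
  rw [zMap, Category.assoc, tensorMul_comp_counit A B m mB εB hB_counit_mul,
    tensorHom_comp_tensorHom_assoc, hcounital, hunit_counit, tensorHom_id]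

lemma whiskerLeft_unit_comp_zMap {γ : A ⟶ A ⊗ B}
    (hA_mul_one : (A ◁ j) ≫ m = (ρ_ A).hom) (hB_mul_one : (B ◁ jB) ≫ mB = (ρ_ B).hom)
    (hγ_one : j ≫ γ = (λ_ (𝟙_ 𝒱)).inv ≫ (j ⊗ₘ jB)) :
    (B ◁ j) ≫ zMap A B m j mB γ = (ρ_ B).hom ≫ (λ_ B).inv ≫ (j ▷ B) := by
  rw [zMap, ← id_tensorHom, tensorHom_comp_tensorHom_assoc, Category.id_comp, hγ_one,
    tensorHom_unit_comp_tensorMul A B m mB j jB _ hA_mul_one hB_mul_one]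

lemma whiskerLeft_unit_comp_zMap_mul {γ : A ⟶ A ⊗ B}
    (hA_mul_one : (A ◁ j) ≫ m = (ρ_ A).hom) (hB_mul_one : (B ◁ jB) ≫ mB = (ρ_ B).hom)
    (hγ_one : j ≫ γ = (λ_ (𝟙_ 𝒱)).inv ≫ (j ⊗ₘ jB)) :
    ((A ⊗ B) ◁ j) ≫ (α_ A B A).hom ≫ (A ◁ zMap A B m j mB γ) ≫ (α_ A A B).inv ≫ (m ▷ B)
      = (ρ_ (A ⊗ B)).hom := by
  have hassoc : ((A ⊗ B) ◁ j) ≫ (α_ A B A).hom ≫ (A ◁ zMap A B m j mB γ)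
      = (α_ A B (𝟙_ 𝒱)).hom ≫ (A ◁ ((B ◁ j) ≫ zMap A B m j mB γ)) := by monoidal
  have hmul : A ◁ (j ▷ B) ≫ (α_ A A B).inv ≫ (m ▷ B)
      = (α_ A (𝟙_ 𝒱) B).inv ≫ (((A ◁ j) ≫ m) ▷ B) := by monoidal
  rw [reassoc_of% hassoc, whiskerLeft_unit_comp_zMap hA_mul_one hB_mul_one hγ_one]
  simp only [whiskerLeft_comp, Category.assoc]
  rw [hmul, hA_mul_one]
  monoidal

variable {Δ : B ⟶ B ⊗ B} {τ : 𝟙_ 𝒱 ⟶ (A ⊗ B) ⊗ B} {εB : B ⟶ 𝟙_ 𝒱}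

lemma dMap_comp (g : (A ⊗ B) ⊗ B ⟶ A ⊗ B)
    (hg : tensorMul (A ⊗ B) B (tensorMul A B m mB) mB ≫ g = (g ⊗ₘ g) ≫ tensorMul A B m mB)
    (hτ : τ ≫ g = (λ_ (𝟙_ 𝒱)).inv ≫ (j ⊗ₘ jB))
    (hA_mul_one : (A ◁ j) ≫ m = (ρ_ A).hom) (hB_mul_one : (B ◁ jB) ≫ mB = (ρ_ B).hom) :
    dMap A B m j mB Δ τ ≫ g = ((λ_ B).inv ≫ (j ⊗ₘ Δ) ≫ (α_ A B B).inv) ≫ g := by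
  rw [dMap, Category.assoc, Category.assoc, hg, tensorHom_comp_tensorHom_assoc, hτ,
    tensorHom_unit_comp_tensorMul A B m mB j jB _ hA_mul_one hB_mul_one, Iso.inv_hom_id_assoc]

lemma dMap_comp_counit
    (hA_mul_one : (A ◁ j) ≫ m = (ρ_ A).hom) (hB_mul_one : (B ◁ jB) ≫ mB = (ρ_ B).hom)
    (hB_counit_right : Δ ≫ (B ◁ εB) ≫ (ρ_ B).hom = 𝟙 B)
    (hB_counit_mul : mB ≫ εB = (εB ⊗ₘ εB) ≫ (λ_ (𝟙_ 𝒱)).hom)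
    (hnormal₁ : τ ≫ ((A ⊗ B) ◁ εB) ≫ (ρ_ (A ⊗ B)).hom = (λ_ (𝟙_ 𝒱)).inv ≫ (j ⊗ₘ jB)) :
    dMap A B m j mB Δ τ ≫ ((A ⊗ B) ◁ εB) ≫ (ρ_ (A ⊗ B)).hom = (λ_ B).inv ≫ (j ▷ B) := by
  have hcounit : (A ◁ Δ) ≫ (α_ A B B).inv ≫ ((A ⊗ B) ◁ εB) ≫ (ρ_ (A ⊗ B)).hom
      = A ◁ (Δ ≫ (B ◁ εB) ≫ (ρ_ B).hom) := by monoidal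
  rw [dMap_comp _ (tensorMul_comp_counit _ B _ mB εB hB_counit_mul) hnormal₁ hA_mul_one
    hB_mul_one, MonoidalCategory.tensorHom_def]
  simp only [Category.assoc]
  rw [hcounit, hB_counit_right, whiskerLeft_id, Category.comp_id]

lemma dMap_comp_counit_whiskerRight
    (hA_mul_one : (A ◁ j) ≫ m = (ρ_ A).hom) (hB_mul_one : (B ◁ jB) ≫ mB = (ρ_ B).hom)
    (hB_counit_left : Δ ≫ (εB ▷ B) ≫ (λ_ B).hom = 𝟙 B)
    (hB_counit_mul : mB ≫ εB = (εB ⊗ₘ εB) ≫ (λ_ (𝟙_ 𝒱)).hom)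
    (hnormal₂ : τ ≫ ((A ◁ εB) ▷ B) ≫ ((ρ_ A).hom ▷ B) = (λ_ (𝟙_ 𝒱)).inv ≫ (j ⊗ₘ jB)) :
    dMap A B m j mB Δ τ ≫ (((A ◁ εB) ≫ (ρ_ A).hom) ▷ B) = (λ_ B).inv ≫ (j ▷ B) := by
  have hcounit : (A ◁ Δ) ≫ (α_ A B B).inv ≫ ((A ◁ εB) ▷ B) ≫ ((ρ_ A).hom ▷ B)
      = A ◁ (Δ ≫ (εB ▷ B) ≫ (λ_ B).hom) := by monoidal
  rw [dMap_comp _ (tensorMul_comp_whiskerRight _ B _ mB m _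
      (tensorMul_comp_counit A B m mB εB hB_counit_mul)) (by rwa [comp_whiskerRight])
    hA_mul_one hB_mul_one, comp_whiskerRight, MonoidalCategory.tensorHom_def]
  simp only [Category.assoc]
  rw [hcounit, hB_counit_left, whiskerLeft_id, Category.comp_id]

end TwistedCoaction

theorem twisted_coaction_counit_equations_general
    (A B : 𝒱) (m : A ⊗ A ⟶ A) (j : 𝟙_ 𝒱 ⟶ A)
    (mB : B ⊗ B ⟶ B) (jB : 𝟙_ 𝒱 ⟶ B) (Δ : B ⟶ B ⊗ B) (εB : B ⟶ 𝟙_ 𝒱)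
    -- `A` is a monoid
    (hA_mul_one : (A ◁ j) ≫ m = (ρ_ A).hom)
    -- `B` is a monoid
    (hB_mul_one : (B ◁ jB) ≫ mB = (ρ_ B).hom)
    -- `B` is a comonoid
    (hB_counit_left : Δ ≫ (εB ▷ B) ≫ (λ_ B).hom = 𝟙 B)
    (hB_counit_right : Δ ≫ (B ◁ εB) ≫ (ρ_ B).hom = 𝟙 B)
    -- `B` is a bimonoid: `Δ` and `εB` are monoid morphisms
    (hB_counit_mul : mB ≫ εB = (εB ⊗ₘ εB) ≫ (λ_ (𝟙_ 𝒱)).hom)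
    -- twisted coaction data: `γ` is a monoid morphism, `τ` a normalized `2`-cocycle
    (γ : A ⟶ A ⊗ B) (τ : 𝟙_ 𝒱 ⟶ (A ⊗ B) ⊗ B)
    (hγ_one : j ≫ γ = (λ_ (𝟙_ 𝒱)).inv ≫ (j ⊗ₘ jB))
    (hcounital : γ ≫ (A ◁ εB) ≫ (ρ_ A).hom = 𝟙 A)
    (hnormal₁ : τ ≫ ((A ⊗ B) ◁ εB) ≫ (ρ_ (A ⊗ B)).hom = (λ_ (𝟙_ 𝒱)).inv ≫ (j ⊗ₘ jB))
    (hnormal₂ : τ ≫ ((A ◁ εB) ▷ B) ≫ ((ρ_ A).hom ▷ B) = (λ_ (𝟙_ 𝒱)).inv ≫ (j ⊗ₘ jB)) :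
    (zMap A B m j mB γ ≫ (A ◁ (εB ≫ j)) ≫ m = ((εB ≫ j) ▷ A) ≫ m) ∧
    (dMap A B m j mB Δ τ ≫ ((A ◁ (εB ≫ j)) ▷ B) ≫ (m ▷ B) = (λ_ B).inv ≫ (j ▷ B)) ∧
    (dMap A B m j mB Δ τ ≫ ((A ⊗ B) ◁ (εB ≫ j)) ≫ (α_ A B A).hom
        ≫ (A ◁ zMap A B m j mB γ) ≫ (α_ A A B).inv ≫ (m ▷ B)
      = (λ_ B).inv ≫ (j ▷ B)) := by
  have hw : (A ◁ (εB ≫ j)) ≫ m = (A ◁ εB) ≫ (ρ_ A).hom := by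
    rw [whiskerLeft_comp, Category.assoc, hA_mul_one]
  refine ⟨?iii, ?vi, ?vii⟩
  case iii =>
    rw [hw]
    exact zMap_comp_counit hB_counit_mul hcounital
  case vi =>
    rw [← comp_whiskerRight, hw]
    exact dMap_comp_counit_whiskerRight hA_mul_one hB_mul_one hB_counit_left hB_counit_mul
      hnormal₂
  case vii =>
    rw [whiskerLeft_comp, Category.assoc,
      whiskerLeft_unit_comp_zMap_mul hA_mul_one hB_mul_one hγ_one]
    exact dMap_comp_counit hA_mul_one hB_mul_one hB_counit_right hB_counit_mul hnormal₁

/-- For a twisted coaction `(γ, τ)` of a bimonoid `B` on a monoid `A`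
in a braided monoidal category, with `z := ((j ⊗ 1_B) ∘ λ_B⁻¹) • γ`,
`d := (((j ⊗ Δ) ∘ λ_B⁻¹) • τ) ∘ ρ_B⁻¹` and `w := j ∘ ε_B`, the three counit equations
(iii), (vi) and (vii) of a mixed opwreath hold. -/
theorem twisted_coaction_counit_equations
    (A B : 𝒱) (m : A ⊗ A ⟶ A) (j : 𝟙_ 𝒱 ⟶ A)
    (mB : B ⊗ B ⟶ B) (jB : 𝟙_ 𝒱 ⟶ B) (Δ : B ⟶ B ⊗ B) (εB : B ⟶ 𝟙_ 𝒱)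
    -- `A` is a monoid
    (hA_assoc : (m ▷ A) ≫ m = (α_ A A A).hom ≫ (A ◁ m) ≫ m)
    (hA_one_mul : (j ▷ A) ≫ m = (λ_ A).hom)
    (hA_mul_one : (A ◁ j) ≫ m = (ρ_ A).hom)
    -- `B` is a monoid
    (hB_assoc : (mB ▷ B) ≫ mB = (α_ B B B).hom ≫ (B ◁ mB) ≫ mB)
    (hB_one_mul : (jB ▷ B) ≫ mB = (λ_ B).hom)
    (hB_mul_one : (B ◁ jB) ≫ mB = (ρ_ B).hom)
    -- `B` is a comonoid
    (hB_coassoc : Δ ≫ (Δ ▷ B) ≫ (α_ B B B).hom = Δ ≫ (B ◁ Δ))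
    (hB_counit_left : Δ ≫ (εB ▷ B) ≫ (λ_ B).hom = 𝟙 B)
    (hB_counit_right : Δ ≫ (B ◁ εB) ≫ (ρ_ B).hom = 𝟙 B)
    -- `B` is a bimonoid: `Δ` and `εB` are monoid morphisms
    (hB_compat_mul : mB ≫ Δ = (Δ ⊗ₘ Δ) ≫ tensorMul B B mB mB)
    (hB_compat_one : jB ≫ Δ = (λ_ (𝟙_ 𝒱)).inv ≫ (jB ⊗ₘ jB))
    (hB_counit_mul : mB ≫ εB = (εB ⊗ₘ εB) ≫ (λ_ (𝟙_ 𝒱)).hom)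
    (hB_counit_one : jB ≫ εB = 𝟙 (𝟙_ 𝒱))
    -- twisted coaction data: `γ` is a monoid morphism, `τ` a normalized `2`-cocycle
    (γ : A ⟶ A ⊗ B) (τ : 𝟙_ 𝒱 ⟶ (A ⊗ B) ⊗ B)
    (hγ_mul : m ≫ γ = (γ ⊗ₘ γ) ≫ tensorMul A B m mB)
    (hγ_one : j ≫ γ = (λ_ (𝟙_ 𝒱)).inv ≫ (j ⊗ₘ jB))
    (hcounital : γ ≫ (A ◁ εB) ≫ (ρ_ A).hom = 𝟙 A)
    (hτ_coassoc :
      (λ_ A).inv ≫ (τ ⊗ₘ (γ ≫ (γ ▷ B))) ≫ tensorMul (A ⊗ B) B (tensorMul A B m mB) mB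
        = (ρ_ A).inv ≫ ((γ ≫ (A ◁ Δ) ≫ (α_ A B B).inv) ⊗ₘ τ) ≫
            tensorMul (A ⊗ B) B (tensorMul A B m mB) mB)
    (hcocycle :
      (λ_ (𝟙_ 𝒱)).inv ≫
          ((τ ≫ ((A ◁ Δ) ▷ B) ≫ ((α_ A B B).inv ▷ B)) ⊗ₘ ((λ_ (𝟙_ 𝒱)).inv ≫ (τ ⊗ₘ jB))) ≫
          tensorMul ((A ⊗ B) ⊗ B) B (tensorMul (A ⊗ B) B (tensorMul A B m mB) mB) mB
        = (λ_ (𝟙_ 𝒱)).inv ≫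
          ((τ ≫ ((A ⊗ B) ◁ Δ) ≫ (α_ (A ⊗ B) B B).inv) ⊗ₘ (τ ≫ ((γ ▷ B) ▷ B))) ≫
          tensorMul ((A ⊗ B) ⊗ B) B (tensorMul (A ⊗ B) B (tensorMul A B m mB) mB) mB)
    (hnormal₁ : τ ≫ ((A ⊗ B) ◁ εB) ≫ (ρ_ (A ⊗ B)).hom = (λ_ (𝟙_ 𝒱)).inv ≫ (j ⊗ₘ jB))
    (hnormal₂ : τ ≫ ((A ◁ εB) ▷ B) ≫ ((ρ_ A).hom ▷ B) = (λ_ (𝟙_ 𝒱)).inv ≫ (j ⊗ₘ jB)) :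
    (zMap A B m j mB γ ≫ (A ◁ (εB ≫ j)) ≫ m = ((εB ≫ j) ▷ A) ≫ m) ∧
    (dMap A B m j mB Δ τ ≫ ((A ◁ (εB ≫ j)) ▷ B) ≫ (m ▷ B) = (λ_ B).inv ≫ (j ▷ B)) ∧
    (dMap A B m j mB Δ τ ≫ ((A ⊗ B) ◁ (εB ≫ j)) ≫ (α_ A B A).hom
        ≫ (A ◁ zMap A B m j mB γ) ≫ (α_ A A B).inv ≫ (m ▷ B)
      = (λ_ B).inv ≫ (j ▷ B)) :=
  twisted_coaction_counit_equations_general A B m j mB jB Δ εB hA_mul_one hB_mul_one hB_counit_left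
    hB_counit_right hB_counit_mul γ τ hγ_one hcounital hnormal₁ hnormal₂
end

section
/- Let 𝒜 be a monoidal category with unit object I, let T = (T, μ, η) be a monoidal monad on 𝒜, and let (G, ζ, δ, ε) be a mixed opwreath around T equipped with an opmonoidal structure ψ. Then the convolution monoid of endomorphisms of I in the mixed Kleisli category is commutative: for all morphisms f, g : GI → TI of 𝒜, f ∗ g = g ∗ f, where f ∗ g := μ_I ∘ T(μ_I) ∘ T(T(g)) ∘ T(ζ_I) ∘ T(G(f)) ∘ δ_I. -/
/-!
Morphisms `G X ⟶ T Y` form the mixed Kleisli category: `a ⋆ b = δ ≫ (G a ≫ ζ ≫ b♯)♯`,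
where `(-)♯` is Kleisli extension, with identities `ε`. The opmonoidal structure gives a tensor
`a ⊠ b = ψ ≫ ((a ⊗ b) ≫ φ)♯`. Axiom (6.2) makes `ψ` natural for Kleisli maps, and together with
(6.6) this yields the interchange law `(a ⊠ b) ⋆ (c ⊠ d) = (a ⋆ c) ⊠ (b ⋆ d)`, while (6.4) and (6.5)
say that `ε_I` is a unit for `⊠` up to the unitors. On the unit object the Eckmann–Hilton argument
then gives, up to conjugation by `λ_I = ρ_I`,
`f ⋆ g = (f ⊠ ε) ⋆ (ε ⊠ g) = f ⊠ g = (ε ⊠ g) ⋆ (f ⊠ ε) = g ⋆ f`.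
-/

open CategoryTheory MonoidalCategory

namespace CategoryTheory.Monad

variable {C : Type*} [Category C] (T : Monad C)

def bind {X Y : C} (f : X ⟶ T.obj Y) : T.obj X ⟶ T.obj Y := T.map f ≫ T.μ.app Y

lemma η_bind {X Y : C} (f : X ⟶ T.obj Y) : T.η.app X ≫ T.bind f = f := by
  rw [bind, ← T.η.naturality_assoc, T.left_unit]
  exact Category.comp_id f

lemma bind_η (X : C) : T.bind (T.η.app X) = 𝟙 (T.obj X) := T.right_unit X

lemma bind_comp_bind {X Y Z : C} (f : X ⟶ T.obj Y) (g : Y ⟶ T.obj Z) :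
    T.bind f ≫ T.bind g = T.bind (f ≫ T.bind g) := by
  simp only [bind, Functor.map_comp, Category.assoc, T.assoc, T.mu_naturality_assoc]

lemma map_comp_bind {X Y Z : C} (u : X ⟶ Y) (f : Y ⟶ T.obj Z) :
    T.map u ≫ T.bind f = T.bind (u ≫ f) := by
  simp only [bind, Functor.map_comp, Category.assoc]

lemma bind_comp_map {X Y Z : C} (f : X ⟶ T.obj Y) (v : Y ⟶ Z) :
    T.bind f ≫ T.map v = T.bind (f ≫ T.map v) := by
  simp only [bind, Functor.map_comp, Category.assoc, T.mu_naturality]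

end CategoryTheory.Monad

namespace MixedOpwreath

variable {𝒜 : Type*} [Category 𝒜] (T : Monad 𝒜) {G : 𝒜 ⥤ 𝒜}
  (ζ : (T : 𝒜 ⥤ 𝒜) ⋙ G ⟶ G ⋙ (T : 𝒜 ⥤ 𝒜))
  (δ : G ⟶ G ⋙ G ⋙ (T : 𝒜 ⥤ 𝒜)) (ε : G ⟶ (T : 𝒜 ⥤ 𝒜))
  (w1 : ∀ X : 𝒜, G.map (T.μ.app X) ≫ ζ.app X
    = ζ.app (T.obj X) ≫ T.map (ζ.app X) ≫ T.μ.app (G.obj X))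
  (w3 : ∀ X : 𝒜, ζ.app X ≫ T.map (ε.app X) ≫ T.μ.app X = ε.app (T.obj X) ≫ T.μ.app X)
  (w6 : ∀ X : 𝒜, δ.app X ≫ T.map (ε.app (G.obj X)) ≫ T.μ.app (G.obj X) = T.η.app (G.obj X))
  (w7 : ∀ X : 𝒜, δ.app X ≫ T.map (G.map (ε.app X)) ≫ T.map (ζ.app X) ≫ T.μ.app (G.obj X)
    = T.η.app (G.obj X))

def kleisliLift {X Y : 𝒜} (f : X ⟶ T.obj Y) : G.obj X ⟶ T.obj (G.obj Y) := G.map f ≫ ζ.app Y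

def mixedComp {X Y Z : 𝒜} (a : G.obj X ⟶ T.obj Y) (b : G.obj Y ⟶ T.obj Z) :
    G.obj X ⟶ T.obj Z :=
  δ.app X ≫ T.bind (kleisliLift T ζ a ≫ T.bind b)

lemma mixedComp_eq {X Y Z : 𝒜} (a : G.obj X ⟶ T.obj Y) (b : G.obj Y ⟶ T.obj Z) :
    mixedComp T ζ δ a b = δ.app X ≫ T.map (G.map a) ≫ T.map (ζ.app Y) ≫ T.map (T.map b)
      ≫ T.map (T.μ.app Z) ≫ T.μ.app Z := by
  simp only [mixedComp, kleisliLift, Monad.bind, Functor.map_comp, Category.assoc]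

lemma map_comp_kleisliLift {X' X Y : 𝒜} (v : X' ⟶ X) (f : X ⟶ T.obj Y) :
    G.map v ≫ kleisliLift T ζ f = kleisliLift T ζ (v ≫ f) := by
  rw [kleisliLift, kleisliLift, G.map_comp, Category.assoc]

lemma kleisliLift_comp_map {X Y Y' : 𝒜} (f : X ⟶ T.obj Y) (v : Y ⟶ Y') :
    kleisliLift T ζ (f ≫ T.map v) = kleisliLift T ζ f ≫ T.map (G.map v) := by
  rw [kleisliLift, kleisliLift, G.map_comp, Category.assoc, Category.assoc]
  exact congrArg _ (ζ.naturality v)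

include w1 in
lemma kleisliLift_comp_bind {X Y Z : 𝒜} (f : X ⟶ T.obj Y) (g : Y ⟶ T.obj Z) :
    kleisliLift T ζ (f ≫ T.bind g) = kleisliLift T ζ f ≫ T.bind (kleisliLift T ζ g) := by
  calc kleisliLift T ζ (f ≫ T.bind g)
      = kleisliLift T ζ (f ≫ T.map g) ≫ T.bind (ζ.app Z) := by
        simp only [kleisliLift, Monad.bind, G.map_comp, Category.assoc, w1]
    _ = kleisliLift T ζ f ≫ T.bind (kleisliLift T ζ g) := by
        rw [kleisliLift_comp_map, Category.assoc, T.map_comp_bind]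
        rfl

include w3 w6 in
lemma mixedComp_counit {X Y : 𝒜} (a : G.obj X ⟶ T.obj Y) : mixedComp T ζ δ a (ε.app Y) = a := by
  have hlift : kleisliLift T ζ a ≫ T.bind (ε.app Y) = ε.app (G.obj X) ≫ T.bind a := by
    rw [kleisliLift, Category.assoc, Monad.bind, w3, ← Category.assoc]
    exact (ε.naturality a =≫ _).trans (Category.assoc _ _ _)
  rw [mixedComp, hlift, ← T.bind_comp_bind, ← Category.assoc]
  exact (congrArg (· ≫ T.bind a) (w6 X)).trans (T.η_bind a)

include w7 in
lemma counit_mixedComp {X Y : 𝒜} (b : G.obj X ⟶ T.obj Y) : mixedComp T ζ δ (ε.app X) b = b := by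
  have hw7 : δ.app X ≫ T.bind (kleisliLift T ζ (ε.app X)) = T.η.app (G.obj X) := by
    rw [← w7, kleisliLift, Monad.bind, T.map_comp, Category.assoc]
  rw [mixedComp, ← T.bind_comp_bind, ← Category.assoc, hw7, T.η_bind]

lemma mixedComp_conj {X X' Y Y' Z Z' : 𝒜} (u : X' ⟶ X) (e : Y' ≅ Y) (w : Z ⟶ Z')
    (a : G.obj X ⟶ T.obj Y) (b : G.obj Y ⟶ T.obj Z) :
    mixedComp T ζ δ (G.map u ≫ a ≫ T.map e.inv) (G.map e.hom ≫ b ≫ T.map w)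
      = G.map u ≫ mixedComp T ζ δ a b ≫ T.map w := by
  have hδ : δ.app X' ≫ T.map (G.map (G.map u)) = G.map u ≫ δ.app X := (δ.naturality u).symm
  calc mixedComp T ζ δ (G.map u ≫ a ≫ T.map e.inv) (G.map e.hom ≫ b ≫ T.map w)
      = δ.app X' ≫ T.bind (G.map (G.map u) ≫ kleisliLift T ζ a ≫ T.bind (b ≫ T.map w)) := by
        rw [mixedComp, ← Category.assoc (G.map u), kleisliLift_comp_map, ← map_comp_kleisliLift,
          Category.assoc, Category.assoc, T.map_comp_bind, ← G.map_comp_assoc, e.inv_hom_id,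
          G.map_id, Category.id_comp]
    _ = (δ.app X' ≫ T.map (G.map (G.map u))) ≫ T.bind (kleisliLift T ζ a ≫ T.bind b) ≫ T.map w := by
        rw [Category.assoc, T.bind_comp_map, T.map_comp_bind, Category.assoc, T.bind_comp_map]
    _ = G.map u ≫ mixedComp T ζ δ a b ≫ T.map w := by
        rw [hδ, mixedComp, Category.assoc, Category.assoc]

variable [MonoidalCategory 𝒜] (φ : ∀ X Y : 𝒜, T.obj X ⊗ T.obj Y ⟶ T.obj (X ⊗ Y))
  (ψ : ∀ X X' : 𝒜, G.obj (X ⊗ X') ⟶ T.obj (G.obj X ⊗ G.obj X'))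
  (hφ_nat : ∀ {X Y X' Y' : 𝒜} (f : X ⟶ Y) (f' : X' ⟶ Y'),
    (T.map f ⊗ₘ T.map f') ≫ φ Y Y' = φ X X' ≫ T.map (f ⊗ₘ f'))
  (hφ_lu : ∀ X : 𝒜,
    (T.η.app (𝟙_ 𝒜) ▷ T.obj X) ≫ φ (𝟙_ 𝒜) X ≫ T.map (λ_ X).hom = (λ_ (T.obj X)).hom)
  (hφ_ru : ∀ X : 𝒜,
    (T.obj X ◁ T.η.app (𝟙_ 𝒜)) ≫ φ X (𝟙_ 𝒜) ≫ T.map (ρ_ X).hom = (ρ_ (T.obj X)).hom)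
  (hμ_mon : ∀ X Y : 𝒜, (T.μ.app X ⊗ₘ T.μ.app Y) ≫ φ X Y
    = φ (T.obj X) (T.obj Y) ≫ T.map (φ X Y) ≫ T.μ.app (X ⊗ Y))
  (h62 : ∀ {X X' Y Y' : 𝒜} (f : X ⟶ T.obj Y) (f' : X' ⟶ T.obj Y'),
    ψ X X' ≫ T.map (G.map f ⊗ₘ G.map f') ≫ T.map (ζ.app Y ⊗ₘ ζ.app Y')
        ≫ T.map (φ (G.obj Y) (G.obj Y')) ≫ T.μ.app (G.obj Y ⊗ G.obj Y')
      = G.map (f ⊗ₘ f') ≫ G.map (φ Y Y') ≫ ζ.app (Y ⊗ Y') ≫ T.map (ψ Y Y')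
          ≫ T.μ.app (G.obj Y ⊗ G.obj Y'))
  (h64 : ∀ X : 𝒜,
    ψ X (𝟙_ 𝒜) ≫ T.map (T.η.app (G.obj X) ⊗ₘ ε.app (𝟙_ 𝒜))
        ≫ T.map (φ (G.obj X) (𝟙_ 𝒜)) ≫ T.μ.app (G.obj X ⊗ 𝟙_ 𝒜) ≫ T.map (ρ_ (G.obj X)).hom
      = G.map (ρ_ X).hom ≫ T.η.app (G.obj X))
  (h65 : ∀ X : 𝒜,
    ψ (𝟙_ 𝒜) X ≫ T.map (ε.app (𝟙_ 𝒜) ⊗ₘ T.η.app (G.obj X))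
        ≫ T.map (φ (𝟙_ 𝒜) (G.obj X)) ≫ T.μ.app (𝟙_ 𝒜 ⊗ G.obj X) ≫ T.map (λ_ (G.obj X)).hom
      = G.map (λ_ X).hom ≫ T.η.app (G.obj X))
  (h66 : ∀ X X' : 𝒜,
    δ.app (X ⊗ X') ≫ T.map (G.map (ψ X X')) ≫ T.map (ζ.app (G.obj X ⊗ G.obj X'))
        ≫ T.map (T.map (ψ (G.obj X) (G.obj X')))
        ≫ T.map (T.μ.app (G.obj (G.obj X) ⊗ G.obj (G.obj X')))
        ≫ T.μ.app (G.obj (G.obj X) ⊗ G.obj (G.obj X'))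
      = ψ X X' ≫ T.map (δ.app X ⊗ₘ δ.app X')
          ≫ T.map (φ (G.obj (G.obj X)) (G.obj (G.obj X')))
          ≫ T.μ.app (G.obj (G.obj X) ⊗ G.obj (G.obj X')))

def kleisliTensor {A B X Y : 𝒜} (p : A ⟶ T.obj X) (q : B ⟶ T.obj Y) : A ⊗ B ⟶ T.obj (X ⊗ Y) :=
  (p ⊗ₘ q) ≫ φ X Y

include hφ_nat hμ_mon in
lemma φ_comp_bind_kleisliTensor {A B X Y : 𝒜} (p : A ⟶ T.obj X) (q : B ⟶ T.obj Y) :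
    φ A B ≫ T.bind (kleisliTensor T φ p q) = (T.bind p ⊗ₘ T.bind q) ≫ φ X Y := by
  calc φ A B ≫ T.bind (kleisliTensor T φ p q)
      = φ A B ≫ T.map (p ⊗ₘ q) ≫ T.map (φ X Y) ≫ T.μ.app (X ⊗ Y) := by
        simp only [Monad.bind, kleisliTensor, Functor.map_comp, Category.assoc]
    _ = (T.map p ⊗ₘ T.map q) ≫ (T.μ.app X ⊗ₘ T.μ.app Y) ≫ φ X Y := by
        rw [hμ_mon, reassoc_of% hφ_nat]
    _ = (T.bind p ⊗ₘ T.bind q) ≫ φ X Y := by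
        rw [tensorHom_comp_tensorHom_assoc, Monad.bind, Monad.bind]

include hφ_nat hμ_mon in
lemma kleisliTensor_comp_bind {A B X Y X' Y' : 𝒜} (a : A ⟶ T.obj X) (b : B ⟶ T.obj Y)
    (p : X ⟶ T.obj X') (q : Y ⟶ T.obj Y') :
    kleisliTensor T φ a b ≫ T.bind (kleisliTensor T φ p q)
      = kleisliTensor T φ (a ≫ T.bind p) (b ≫ T.bind q) := by
  rw [kleisliTensor, Category.assoc, φ_comp_bind_kleisliTensor T φ hφ_nat hμ_mon,
    tensorHom_comp_tensorHom_assoc, kleisliTensor]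

include hφ_lu in
lemma kleisliTensor_η_left {A Y : 𝒜} (b : A ⟶ T.obj Y) :
    kleisliTensor T φ (T.η.app (𝟙_ 𝒜)) b = (λ_ A).hom ≫ b ≫ T.map (λ_ Y).inv := by
  have hη : (T.η.app (𝟙_ 𝒜) ▷ T.obj Y) ≫ φ (𝟙_ 𝒜) Y = (λ_ (T.obj Y)).hom ≫ T.map (λ_ Y).inv := by
    rw [← hφ_lu, Category.assoc, Category.assoc, ← T.map_comp, Iso.hom_inv_id, T.map_id,
      Category.comp_id]
  rw [kleisliTensor, tensorHom_def', Category.assoc, hη]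
  exact leftUnitor_naturality_assoc b _

include hφ_ru in
lemma kleisliTensor_η_right {A X : 𝒜} (a : A ⟶ T.obj X) :
    kleisliTensor T φ a (T.η.app (𝟙_ 𝒜)) = (ρ_ A).hom ≫ a ≫ T.map (ρ_ X).inv := by
  have hη : (T.obj X ◁ T.η.app (𝟙_ 𝒜)) ≫ φ X (𝟙_ 𝒜) = (ρ_ (T.obj X)).hom ≫ T.map (ρ_ X).inv := by
    rw [← hφ_ru, Category.assoc, Category.assoc, ← T.map_comp, Iso.hom_inv_id, T.map_id,
      Category.comp_id]
  rw [kleisliTensor, MonoidalCategory.tensorHom_def, Category.assoc, hη]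
  exact rightUnitor_naturality_assoc a _

def mixedTensor {X X' Y Y' : 𝒜} (a : G.obj X ⟶ T.obj Y) (b : G.obj X' ⟶ T.obj Y') :
    G.obj (X ⊗ X') ⟶ T.obj (Y ⊗ Y') :=
  ψ X X' ≫ T.bind (kleisliTensor T φ a b)

include hφ_nat hμ_mon in
lemma mixedTensor_comp_bind {X X' Y Y' Z Z' : 𝒜} (a : G.obj X ⟶ T.obj Y)
    (b : G.obj X' ⟶ T.obj Y') (p : Y ⟶ T.obj Z) (q : Y' ⟶ T.obj Z') :
    mixedTensor T φ ψ a b ≫ T.bind (kleisliTensor T φ p q)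
      = mixedTensor T φ ψ (a ≫ T.bind p) (b ≫ T.bind q) := by
  rw [mixedTensor, Category.assoc, T.bind_comp_bind,
    kleisliTensor_comp_bind T φ hφ_nat hμ_mon, mixedTensor]

include hφ_nat hφ_lu hμ_mon h65 in
lemma mixedTensor_counit_left {X Y : 𝒜} (b : G.obj X ⟶ T.obj Y) :
    mixedTensor T φ ψ (ε.app (𝟙_ 𝒜)) b = G.map (λ_ X).hom ≫ b ≫ T.map (λ_ Y).inv := by
  have h65' : mixedTensor T φ ψ (ε.app (𝟙_ 𝒜)) (T.η.app (G.obj X)) ≫ T.map (λ_ (G.obj X)).hom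
      = G.map (λ_ X).hom ≫ T.η.app (G.obj X) := by
    rw [← h65, mixedTensor, kleisliTensor, Monad.bind, T.map_comp]
    simp only [Category.assoc]
  calc mixedTensor T φ ψ (ε.app (𝟙_ 𝒜)) b
      = mixedTensor T φ ψ (ε.app (𝟙_ 𝒜) ≫ T.bind (T.η.app (𝟙_ 𝒜)))
          (T.η.app (G.obj X) ≫ T.bind b) := by
        rw [T.bind_η, Category.comp_id, T.η_bind]
    _ = (mixedTensor T φ ψ (ε.app (𝟙_ 𝒜)) (T.η.app (G.obj X)) ≫ T.map (λ_ (G.obj X)).hom)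
          ≫ T.bind (b ≫ T.map (λ_ Y).inv) := by
        rw [← mixedTensor_comp_bind T φ ψ hφ_nat hμ_mon, kleisliTensor_η_left T φ hφ_lu,
          Category.assoc, T.map_comp_bind]
    _ = G.map (λ_ X).hom ≫ b ≫ T.map (λ_ Y).inv := by
        rw [h65', Category.assoc, T.η_bind]

include hφ_nat hφ_ru hμ_mon h64 in
lemma mixedTensor_counit_right {X Y : 𝒜} (a : G.obj X ⟶ T.obj Y) :
    mixedTensor T φ ψ a (ε.app (𝟙_ 𝒜)) = G.map (ρ_ X).hom ≫ a ≫ T.map (ρ_ Y).inv := by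
  have h64' : mixedTensor T φ ψ (T.η.app (G.obj X)) (ε.app (𝟙_ 𝒜)) ≫ T.map (ρ_ (G.obj X)).hom
      = G.map (ρ_ X).hom ≫ T.η.app (G.obj X) := by
    rw [← h64, mixedTensor, kleisliTensor, Monad.bind, T.map_comp]
    simp only [Category.assoc]
  calc mixedTensor T φ ψ a (ε.app (𝟙_ 𝒜))
      = mixedTensor T φ ψ (T.η.app (G.obj X) ≫ T.bind a)
          (ε.app (𝟙_ 𝒜) ≫ T.bind (T.η.app (𝟙_ 𝒜))) := by
        rw [T.bind_η, Category.comp_id, T.η_bind]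
    _ = (mixedTensor T φ ψ (T.η.app (G.obj X)) (ε.app (𝟙_ 𝒜)) ≫ T.map (ρ_ (G.obj X)).hom)
          ≫ T.bind (a ≫ T.map (ρ_ Y).inv) := by
        rw [← mixedTensor_comp_bind T φ ψ hφ_nat hμ_mon, kleisliTensor_η_right T φ hφ_ru,
          Category.assoc, T.map_comp_bind]
    _ = G.map (ρ_ X).hom ≫ a ≫ T.map (ρ_ Y).inv := by
        rw [h64', Category.assoc, T.η_bind]

include h62 in
lemma mixedTensor_kleisliLift {X X' Y Y' : 𝒜} (f : X ⟶ T.obj Y) (f' : X' ⟶ T.obj Y') :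
    mixedTensor T φ ψ (kleisliLift T ζ f) (kleisliLift T ζ f')
      = kleisliLift T ζ (kleisliTensor T φ f f') ≫ T.bind (ψ Y Y') := by
  simpa only [mixedTensor, kleisliTensor, kleisliLift, Monad.bind, ← tensorHom_comp_tensorHom,
    Functor.map_comp, Category.assoc] using h62 f f'

include hφ_nat hμ_mon h62 in
lemma kleisliLift_kleisliTensor_comp_bind_mixedTensor {X X' Y Y' Z Z' : 𝒜}
    (f : X ⟶ T.obj Y) (f' : X' ⟶ T.obj Y') (c : G.obj Y ⟶ T.obj Z) (d : G.obj Y' ⟶ T.obj Z') :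
    kleisliLift T ζ (kleisliTensor T φ f f') ≫ T.bind (mixedTensor T φ ψ c d)
      = mixedTensor T φ ψ (kleisliLift T ζ f ≫ T.bind c) (kleisliLift T ζ f' ≫ T.bind d) := by
  rw [mixedTensor, ← T.bind_comp_bind, ← Category.assoc, ← mixedTensor_kleisliLift T ζ φ ψ h62,
    mixedTensor_comp_bind T φ ψ hφ_nat hμ_mon]

include w1 hφ_nat hμ_mon h62 h66 in
lemma mixedComp_mixedTensor {X X' Y Y' Z Z' : 𝒜} (a : G.obj X ⟶ T.obj Y)
    (b : G.obj X' ⟶ T.obj Y') (c : G.obj Y ⟶ T.obj Z) (d : G.obj Y' ⟶ T.obj Z') :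
    mixedComp T ζ δ (mixedTensor T φ ψ a b) (mixedTensor T φ ψ c d)
      = mixedTensor T φ ψ (mixedComp T ζ δ a c) (mixedComp T ζ δ b d) := by
  have h66' : δ.app (X ⊗ X') ≫ T.bind (kleisliLift T ζ (ψ X X') ≫ T.bind (ψ (G.obj X) (G.obj X')))
      = ψ X X' ≫ T.bind (kleisliTensor T φ (δ.app X) (δ.app X')) := by
    simpa only [kleisliLift, kleisliTensor, Monad.bind, Functor.map_comp, Category.assoc]
      using h66 X X'
  calc mixedComp T ζ δ (mixedTensor T φ ψ a b) (mixedTensor T φ ψ c d)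
      = δ.app (X ⊗ X') ≫ T.bind (kleisliLift T ζ (ψ X X') ≫
          T.bind (kleisliLift T ζ (kleisliTensor T φ a b) ≫ T.bind (mixedTensor T φ ψ c d))) := by
        rw [mixedComp, mixedTensor, kleisliLift_comp_bind T ζ w1, Category.assoc, T.bind_comp_bind]
    _ = (δ.app (X ⊗ X') ≫ T.bind (kleisliLift T ζ (ψ X X') ≫ T.bind (ψ (G.obj X) (G.obj X'))))
          ≫ T.bind (kleisliTensor T φ (kleisliLift T ζ a ≫ T.bind c)
            (kleisliLift T ζ b ≫ T.bind d)) := by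
        rw [kleisliLift_kleisliTensor_comp_bind_mixedTensor T ζ φ ψ hφ_nat hμ_mon h62, mixedTensor]
        simp only [T.bind_comp_bind, Category.assoc]
    _ = mixedTensor T φ ψ (mixedComp T ζ δ a c) (mixedComp T ζ δ b d) := by
        rw [h66', Category.assoc, T.bind_comp_bind, kleisliTensor_comp_bind T φ hφ_nat hμ_mon,
          mixedTensor, mixedComp, mixedComp]

include w1 w3 w6 w7 hφ_nat hφ_lu hφ_ru hμ_mon h62 h64 h65 h66 in
theorem mixedComp_comm (f g : G.obj (𝟙_ 𝒜) ⟶ T.obj (𝟙_ 𝒜)) :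
    mixedComp T ζ δ f g = mixedComp T ζ δ g f := by
  let conj (a : G.obj (𝟙_ 𝒜) ⟶ T.obj (𝟙_ 𝒜)) : G.obj (𝟙_ 𝒜 ⊗ 𝟙_ 𝒜) ⟶ T.obj (𝟙_ 𝒜 ⊗ 𝟙_ 𝒜) :=
    G.map (λ_ (𝟙_ 𝒜)).hom ≫ a ≫ T.map (λ_ (𝟙_ 𝒜)).inv
  have hconj (a b) : mixedComp T ζ δ (conj a) (conj b) = conj (mixedComp T ζ δ a b) :=
    mixedComp_conj T ζ δ _ (λ_ (𝟙_ 𝒜)) _ a b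
  have hleft (b) : mixedTensor T φ ψ (ε.app (𝟙_ 𝒜)) b = conj b :=
    mixedTensor_counit_left T ε φ ψ hφ_nat hφ_lu hμ_mon h65 b
  have hright (a) : mixedTensor T φ ψ a (ε.app (𝟙_ 𝒜)) = conj a := by
    rw [mixedTensor_counit_right T ε φ ψ hφ_nat hφ_ru hμ_mon h64, ← unitors_equal,
      ← unitors_inv_equal]
  have hfg : conj (mixedComp T ζ δ f g) = mixedTensor T φ ψ f g := by
    rw [← hconj, ← hright, ← hleft, mixedComp_mixedTensor T ζ δ w1 φ ψ hφ_nat hμ_mon h62 h66,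
      mixedComp_counit T ζ δ ε w3 w6, counit_mixedComp T ζ δ ε w7]
  have hgf : conj (mixedComp T ζ δ g f) = mixedTensor T φ ψ f g := by
    rw [← hconj, ← hleft, ← hright, mixedComp_mixedTensor T ζ δ w1 φ ψ hφ_nat hμ_mon h62 h66,
      mixedComp_counit T ζ δ ε w3 w6, counit_mixedComp T ζ δ ε w7]
  exact (cancel_mono _).1 ((cancel_epi _).1 (hfg.trans hgf.symm))

end MixedOpwreath

theorem opmonoidal_mixed_opwreath_convolution_comm_general
    {𝒜 : Type*} [Category 𝒜] [MonoidalCategory 𝒜]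
    (T G : 𝒜 ⥤ 𝒜) (μ : T ⋙ T ⟶ T) (η : 𝟭 𝒜 ⟶ T)
    (hassoc : ∀ X : 𝒜, T.map (μ.app X) ≫ μ.app X = μ.app (T.obj X) ≫ μ.app X)
    (hlunit : ∀ X : 𝒜, η.app (T.obj X) ≫ μ.app X = 𝟙 (T.obj X))
    (hrunit : ∀ X : 𝒜, T.map (η.app X) ≫ μ.app X = 𝟙 (T.obj X))
    (ζ : T ⋙ G ⟶ G ⋙ T) (δ : G ⟶ G ⋙ G ⋙ T) (ε : G ⟶ T)
    (w1 : ∀ X : 𝒜, G.map (μ.app X) ≫ ζ.app X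
        = ζ.app (T.obj X) ≫ T.map (ζ.app X) ≫ μ.app (G.obj X))
    (w3 : ∀ X : 𝒜, ζ.app X ≫ T.map (ε.app X) ≫ μ.app X = ε.app (T.obj X) ≫ μ.app X)
    (w6 : ∀ X : 𝒜, δ.app X ≫ T.map (ε.app (G.obj X)) ≫ μ.app (G.obj X) = η.app (G.obj X))
    (w7 : ∀ X : 𝒜, δ.app X ≫ T.map (G.map (ε.app X)) ≫ T.map (ζ.app X) ≫ μ.app (G.obj X)
        = η.app (G.obj X))
    -- lax monoidal structure on `T` with nullary part `η.app (𝟙_ 𝒜)`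
    (φ : ∀ X Y : 𝒜, T.obj X ⊗ T.obj Y ⟶ T.obj (X ⊗ Y))
    (hφ_nat : ∀ {X Y X' Y' : 𝒜} (f : X ⟶ Y) (f' : X' ⟶ Y'),
        (T.map f ⊗ₘ T.map f') ≫ φ Y Y' = φ X X' ≫ T.map (f ⊗ₘ f'))
    (hφ_lu : ∀ X : 𝒜,
        (η.app (𝟙_ 𝒜) ▷ T.obj X) ≫ φ (𝟙_ 𝒜) X ≫ T.map (λ_ X).hom = (λ_ (T.obj X)).hom)
    (hφ_ru : ∀ X : 𝒜,
        (T.obj X ◁ η.app (𝟙_ 𝒜)) ≫ φ X (𝟙_ 𝒜) ≫ T.map (ρ_ X).hom = (ρ_ (T.obj X)).hom)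
    -- `μ` and `η` are monoidal natural transformations
    (hμ_mon : ∀ X Y : 𝒜, (μ.app X ⊗ₘ μ.app Y) ≫ φ X Y
        = φ (T.obj X) (T.obj Y) ≫ T.map (φ X Y) ≫ μ.app (X ⊗ Y))
    -- opmonoidal structure `ψ` on the mixed opwreath
    (ψ : ∀ X X' : 𝒜, G.obj (X ⊗ X') ⟶ T.obj (G.obj X ⊗ G.obj X'))
    (h62 : ∀ {X X' Y Y' : 𝒜} (f : X ⟶ T.obj Y) (f' : X' ⟶ T.obj Y'),
        ψ X X' ≫ T.map (G.map f ⊗ₘ G.map f') ≫ T.map (ζ.app Y ⊗ₘ ζ.app Y')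
            ≫ T.map (φ (G.obj Y) (G.obj Y')) ≫ μ.app (G.obj Y ⊗ G.obj Y')
          = G.map (f ⊗ₘ f') ≫ G.map (φ Y Y') ≫ ζ.app (Y ⊗ Y') ≫ T.map (ψ Y Y')
              ≫ μ.app (G.obj Y ⊗ G.obj Y'))
    (h64 : ∀ X : 𝒜,
        ψ X (𝟙_ 𝒜) ≫ T.map (η.app (G.obj X) ⊗ₘ ε.app (𝟙_ 𝒜))
            ≫ T.map (φ (G.obj X) (𝟙_ 𝒜)) ≫ μ.app (G.obj X ⊗ 𝟙_ 𝒜)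
            ≫ T.map (ρ_ (G.obj X)).hom
          = G.map (ρ_ X).hom ≫ η.app (G.obj X))
    (h65 : ∀ X : 𝒜,
        ψ (𝟙_ 𝒜) X ≫ T.map (ε.app (𝟙_ 𝒜) ⊗ₘ η.app (G.obj X))
            ≫ T.map (φ (𝟙_ 𝒜) (G.obj X)) ≫ μ.app (𝟙_ 𝒜 ⊗ G.obj X)
            ≫ T.map (λ_ (G.obj X)).hom
          = G.map (λ_ X).hom ≫ η.app (G.obj X))
    (h66 : ∀ X X' : 𝒜,
        δ.app (X ⊗ X') ≫ T.map (G.map (ψ X X')) ≫ T.map (ζ.app (G.obj X ⊗ G.obj X'))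
            ≫ T.map (T.map (ψ (G.obj X) (G.obj X')))
            ≫ T.map (μ.app (G.obj (G.obj X) ⊗ G.obj (G.obj X')))
            ≫ μ.app (G.obj (G.obj X) ⊗ G.obj (G.obj X'))
          = ψ X X' ≫ T.map (δ.app X ⊗ₘ δ.app X')
              ≫ T.map (φ (G.obj (G.obj X)) (G.obj (G.obj X')))
              ≫ μ.app (G.obj (G.obj X) ⊗ G.obj (G.obj X')))
    -- conclusion: convolution of endomorphisms of the unit object is commutative
    (f g : G.obj (𝟙_ 𝒜) ⟶ T.obj (𝟙_ 𝒜)) :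
    δ.app (𝟙_ 𝒜) ≫ T.map (G.map f) ≫ T.map (ζ.app (𝟙_ 𝒜)) ≫ T.map (T.map g)
        ≫ T.map (μ.app (𝟙_ 𝒜)) ≫ μ.app (𝟙_ 𝒜)
      = δ.app (𝟙_ 𝒜) ≫ T.map (G.map g) ≫ T.map (ζ.app (𝟙_ 𝒜)) ≫ T.map (T.map f)
          ≫ T.map (μ.app (𝟙_ 𝒜)) ≫ μ.app (𝟙_ 𝒜) := by
  let M : Monad 𝒜 :=
    { toFunctor := T, η := η, μ := μ, assoc := hassoc, left_unit := hlunit, right_unit := hrunit }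
  simpa only [MixedOpwreath.mixedComp_eq] using
    MixedOpwreath.mixedComp_comm M ζ δ ε w1 w3 w6 w7 φ ψ hφ_nat hφ_lu hφ_ru hμ_mon h62 h64 h65 h66 f g

/-- Let `𝒜` be a monoidal category with unit `𝟙_𝒜`, let `T` be a
monoidal monad on `𝒜` with lax monoidal structure `φ` (and nullary part `η_I`), and let
`(G, ζ, δ, ε)` be a mixed opwreath around `T` equipped with an opmonoidal structure
`ψ`.  Then the convolution monoid of endomorphisms of `𝟙_𝒜` in the mixed Kleisli
category is commutative. -/
theorem opmonoidal_mixed_opwreath_convolution_comm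
    {𝒜 : Type*} [Category 𝒜] [MonoidalCategory 𝒜]
    (T G : 𝒜 ⥤ 𝒜) (μ : T ⋙ T ⟶ T) (η : 𝟭 𝒜 ⟶ T)
    (hassoc : ∀ X : 𝒜, T.map (μ.app X) ≫ μ.app X = μ.app (T.obj X) ≫ μ.app X)
    (hlunit : ∀ X : 𝒜, η.app (T.obj X) ≫ μ.app X = 𝟙 (T.obj X))
    (hrunit : ∀ X : 𝒜, T.map (η.app X) ≫ μ.app X = 𝟙 (T.obj X))
    (ζ : T ⋙ G ⟶ G ⋙ T) (δ : G ⟶ G ⋙ G ⋙ T) (ε : G ⟶ T)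
    (w1 : ∀ X : 𝒜, G.map (μ.app X) ≫ ζ.app X
        = ζ.app (T.obj X) ≫ T.map (ζ.app X) ≫ μ.app (G.obj X))
    (w2 : ∀ X : 𝒜, G.map (η.app X) ≫ ζ.app X = η.app (G.obj X))
    (w3 : ∀ X : 𝒜, ζ.app X ≫ T.map (ε.app X) ≫ μ.app X = ε.app (T.obj X) ≫ μ.app X)
    (w4 : ∀ X : 𝒜, ζ.app X ≫ T.map (δ.app X) ≫ μ.app (G.obj (G.obj X))
        = δ.app (T.obj X) ≫ T.map (G.map (ζ.app X)) ≫ T.map (ζ.app (G.obj X))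
            ≫ μ.app (G.obj (G.obj X)))
    (w5 : ∀ X : 𝒜, δ.app X ≫ T.map (δ.app (G.obj X)) ≫ μ.app (G.obj (G.obj (G.obj X)))
        = δ.app X ≫ T.map (G.map (δ.app X)) ≫ T.map (ζ.app (G.obj (G.obj X)))
            ≫ μ.app (G.obj (G.obj (G.obj X))))
    (w6 : ∀ X : 𝒜, δ.app X ≫ T.map (ε.app (G.obj X)) ≫ μ.app (G.obj X) = η.app (G.obj X))
    (w7 : ∀ X : 𝒜, δ.app X ≫ T.map (G.map (ε.app X)) ≫ T.map (ζ.app X) ≫ μ.app (G.obj X)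
        = η.app (G.obj X))
    -- lax monoidal structure on `T` with nullary part `η.app (𝟙_ 𝒜)`
    (φ : ∀ X Y : 𝒜, T.obj X ⊗ T.obj Y ⟶ T.obj (X ⊗ Y))
    (hφ_nat : ∀ {X Y X' Y' : 𝒜} (f : X ⟶ Y) (f' : X' ⟶ Y'),
        (T.map f ⊗ₘ T.map f') ≫ φ Y Y' = φ X X' ≫ T.map (f ⊗ₘ f'))
    (hφ_assoc : ∀ X Y Z : 𝒜,
        (φ X Y ▷ T.obj Z) ≫ φ (X ⊗ Y) Z ≫ T.map (α_ X Y Z).hom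
          = (α_ (T.obj X) (T.obj Y) (T.obj Z)).hom ≫ (T.obj X ◁ φ Y Z) ≫ φ X (Y ⊗ Z))
    (hφ_lu : ∀ X : 𝒜,
        (η.app (𝟙_ 𝒜) ▷ T.obj X) ≫ φ (𝟙_ 𝒜) X ≫ T.map (λ_ X).hom = (λ_ (T.obj X)).hom)
    (hφ_ru : ∀ X : 𝒜,
        (T.obj X ◁ η.app (𝟙_ 𝒜)) ≫ φ X (𝟙_ 𝒜) ≫ T.map (ρ_ X).hom = (ρ_ (T.obj X)).hom)
    -- `μ` and `η` are monoidal natural transformations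
    (hμ_mon : ∀ X Y : 𝒜, (μ.app X ⊗ₘ μ.app Y) ≫ φ X Y
        = φ (T.obj X) (T.obj Y) ≫ T.map (φ X Y) ≫ μ.app (X ⊗ Y))
    (hη_mon : ∀ X Y : 𝒜, (η.app X ⊗ₘ η.app Y) ≫ φ X Y = η.app (X ⊗ Y))
    -- opmonoidal structure `ψ` on the mixed opwreath
    (ψ : ∀ X X' : 𝒜, G.obj (X ⊗ X') ⟶ T.obj (G.obj X ⊗ G.obj X'))
    (h62 : ∀ {X X' Y Y' : 𝒜} (f : X ⟶ T.obj Y) (f' : X' ⟶ T.obj Y'),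
        ψ X X' ≫ T.map (G.map f ⊗ₘ G.map f') ≫ T.map (ζ.app Y ⊗ₘ ζ.app Y')
            ≫ T.map (φ (G.obj Y) (G.obj Y')) ≫ μ.app (G.obj Y ⊗ G.obj Y')
          = G.map (f ⊗ₘ f') ≫ G.map (φ Y Y') ≫ ζ.app (Y ⊗ Y') ≫ T.map (ψ Y Y')
              ≫ μ.app (G.obj Y ⊗ G.obj Y'))
    (h63 : ∀ X X' X'' : 𝒜,
        ψ (X ⊗ X') X'' ≫ T.map (ψ X X' ⊗ₘ η.app (G.obj X''))
            ≫ T.map (φ (G.obj X ⊗ G.obj X') (G.obj X''))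
            ≫ μ.app ((G.obj X ⊗ G.obj X') ⊗ G.obj X'')
            ≫ T.map (α_ (G.obj X) (G.obj X') (G.obj X'')).hom
          = G.map (α_ X X' X'').hom ≫ ψ X (X' ⊗ X'')
              ≫ T.map (η.app (G.obj X) ⊗ₘ ψ X' X'')
              ≫ T.map (φ (G.obj X) (G.obj X' ⊗ G.obj X''))
              ≫ μ.app (G.obj X ⊗ (G.obj X' ⊗ G.obj X'')))
    (h64 : ∀ X : 𝒜,
        ψ X (𝟙_ 𝒜) ≫ T.map (η.app (G.obj X) ⊗ₘ ε.app (𝟙_ 𝒜))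
            ≫ T.map (φ (G.obj X) (𝟙_ 𝒜)) ≫ μ.app (G.obj X ⊗ 𝟙_ 𝒜)
            ≫ T.map (ρ_ (G.obj X)).hom
          = G.map (ρ_ X).hom ≫ η.app (G.obj X))
    (h65 : ∀ X : 𝒜,
        ψ (𝟙_ 𝒜) X ≫ T.map (ε.app (𝟙_ 𝒜) ⊗ₘ η.app (G.obj X))
            ≫ T.map (φ (𝟙_ 𝒜) (G.obj X)) ≫ μ.app (𝟙_ 𝒜 ⊗ G.obj X)
            ≫ T.map (λ_ (G.obj X)).hom
          = G.map (λ_ X).hom ≫ η.app (G.obj X))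
    (h66 : ∀ X X' : 𝒜,
        δ.app (X ⊗ X') ≫ T.map (G.map (ψ X X')) ≫ T.map (ζ.app (G.obj X ⊗ G.obj X'))
            ≫ T.map (T.map (ψ (G.obj X) (G.obj X')))
            ≫ T.map (μ.app (G.obj (G.obj X) ⊗ G.obj (G.obj X')))
            ≫ μ.app (G.obj (G.obj X) ⊗ G.obj (G.obj X'))
          = ψ X X' ≫ T.map (δ.app X ⊗ₘ δ.app X')
              ≫ T.map (φ (G.obj (G.obj X)) (G.obj (G.obj X')))
              ≫ μ.app (G.obj (G.obj X) ⊗ G.obj (G.obj X')))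
    (h67 : ∀ X X' : 𝒜,
        ψ X X' ≫ T.map (ε.app X ⊗ₘ ε.app X') ≫ T.map (φ X X') ≫ μ.app (X ⊗ X')
          = ε.app (X ⊗ X'))
    -- conclusion: convolution of endomorphisms of the unit object is commutative
    (f g : G.obj (𝟙_ 𝒜) ⟶ T.obj (𝟙_ 𝒜)) :
    δ.app (𝟙_ 𝒜) ≫ T.map (G.map f) ≫ T.map (ζ.app (𝟙_ 𝒜)) ≫ T.map (T.map g)
        ≫ T.map (μ.app (𝟙_ 𝒜)) ≫ μ.app (𝟙_ 𝒜)
      = δ.app (𝟙_ 𝒜) ≫ T.map (G.map g) ≫ T.map (ζ.app (𝟙_ 𝒜)) ≫ T.map (T.map f)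
          ≫ T.map (μ.app (𝟙_ 𝒜)) ≫ μ.app (𝟙_ 𝒜) :=
  opmonoidal_mixed_opwreath_convolution_comm_general T G μ η hassoc hlunit hrunit ζ δ ε w1 w3 w6 w7
    φ hφ_nat hφ_lu hφ_ru hμ_mon ψ h62 h64 h65 h66 f g
end
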